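/- arXiv:2511.20786 — 3 statements merged into one kernel-verified Lean document; each statement's English description precedes it below -/
import Mathlib

section
/- Let (X,λ) be a standard σ-finite space and T ∈ Aut(X,λ) a measure-preserving bijection whose action admits a Borel fundamental domain for its orbits on supp T (e.g. T dissipative or conservative periodic). Let D ⊆ X have positive measure. Then T = T₁T₂ with T₁, T₂ in the full group generated by T, where supp T₁ and supp T₂ are disjoint of equal measure, and λ(supp T₁ ∩ D) = λ(supp T₂ ∩ D). -/
open MeasureTheory Set Filter Topology Function
open scoped ENNReal symmDiff

variable {X : Type*}

def supp (T : X → X) : Set X := {x | T x ≠ x}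

def IsMPBij [MeasurableSpace X] (ν : MeasureTheory.Measure X) (T : X → X) : Prop :=
  Measurable T ∧ Function.Bijective T ∧ MeasureTheory.MeasurePreserving T ν ν

def IsMPSubgroup [MeasurableSpace X] (ν : MeasureTheory.Measure X) (G : Set (X → X)) : Prop :=
  (∀ T ∈ G, IsMPBij ν T) ∧ id ∈ G ∧ (∀ T ∈ G, ∀ S ∈ G, T ∘ S ∈ G) ∧
    ∀ T ∈ G, ∃ S ∈ G, Function.LeftInverse S T ∧ Function.RightInverse S T

def IsErgodicSet [MeasurableSpace X] (ν : MeasureTheory.Measure X) (G : Set (X → X)) : Prop :=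
  ∀ A : Set X, MeasurableSet A → (∀ T ∈ G, ν ((T '' A) ∆ A) = 0) → ν A = 0 ∨ ν Aᶜ = 0

def IsFullGroup [MeasurableSpace X] (ν : MeasureTheory.Measure X) (G : Set (X → X)) : Prop :=
  IsMPSubgroup ν G ∧
  (∀ T S : X → X, T ∈ G → IsMPBij ν S → T =ᵐ[ν] S → S ∈ G) ∧
  ∀ (T : X → X) (Ts : ℕ → X → X) (A : ℕ → Set X),
    IsMPBij ν T → (∀ n, Ts n ∈ G) → (∀ n, MeasurableSet (A n)) →
    Pairwise (Disjoint on A) → (⋃ n, A n) = Set.univ →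
    (∀ n, ∀ x ∈ A n, T x = Ts n x) → T ∈ G

def WeakTendsto [MeasurableSpace X] (ν : MeasureTheory.Measure X)
    (T : ℕ → X → X) (S : X → X) : Prop :=
  ∀ B : Set X, MeasurableSet B → ν B < ⊤ →
    Filter.Tendsto (fun n => ν ((T n '' B) ∆ (S '' B))) Filter.atTop (nhds 0)

def fullGroupGen [MeasurableSpace X] (ν : MeasureTheory.Measure X) (T : X → X) :
    Set (X → X) :=
  {S | ∀ G : Set (X → X), IsFullGroup ν G → T ∈ G → S ∈ G}

/-- `x` and `y` lie on the same `T`-orbit (for `T` a bijection). -/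
def sameOrbit (T : X → X) (x y : X) : Prop :=
  ∃ n : ℕ, T^[n] x = y ∨ T^[n] y = x

lemma my_splitpos [MeasurableSpace X] [StandardBorelSpace X] (m : Measure X)
    (hm : ∀ x : X, m {x} = 0) {R : Set X} (hR : MeasurableSet R) (hpos : 0 < m R) :
    ∃ S : Set X, MeasurableSet S ∧ S ⊆ R ∧ 0 < m S ∧ 0 < m (R \ S) := by
  obtain ⟨f, hf⟩ := exists_measurableEmbedding_real X
  by_contra hcon
  push_neg at hcon
  have hchoice : ∀ q : ℚ, ∃ C : Set X, MeasurableSet C ∧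
      (∀ x y : X, x ∈ C → y ∈ C → f x < q → (q : ℝ) ≤ f y → False) ∧ m (R \ C) = 0 := by
    intro q
    set U := f ⁻¹' (Set.Iio (q : ℝ)) with hU
    have hUm : MeasurableSet U := hf.measurable measurableSet_Iio
    by_cases h0 : 0 < m (R ∩ U)
    · have h1 := hcon (R ∩ U) (hR.inter hUm) inter_subset_left h0
      refine ⟨U, hUm, ?_, ?_⟩
      · intro x y hx hy hxq hyq
        exact absurd (show f y < (q:ℝ) from hy) (not_lt.mpr hyq)
      · have h4 : R \ (R ∩ U) = R \ U := by ext z; simp [Set.mem_diff, Set.mem_inter_iff]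
        rw [← h4]
        exact le_antisymm h1 zero_le
    · refine ⟨Uᶜ, hUm.compl, ?_, ?_⟩
      · intro x y hx hy hxq hyq
        exact hx (by simpa [hU] using hxq)
      · have h2 : R \ Uᶜ = R ∩ U := by ext z; simp [Set.mem_diff]
        rw [h2]
        exact le_antisymm (not_lt.mp h0) zero_le
  choose C hCm hCsep hCnull using hchoice
  set Z := R ∩ ⋂ q : ℚ, C q with hZdef
  have hZnull : m (R \ ⋂ q : ℚ, C q) = 0 := by
    refine measure_mono_null (fun x hx => ?_) (measure_iUnion_null (fun q : ℚ => hCnull q))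
    obtain ⟨hxR, hxI⟩ := hx
    simp only [Set.mem_iInter, not_forall] at hxI
    obtain ⟨q, hq⟩ := hxI
    exact Set.mem_iUnion.mpr ⟨q, hxR, hq⟩
  have hZpos : 0 < m Z := by
    have h3 : m R ≤ m Z + m (R \ ⋂ q : ℚ, C q) := measure_le_inter_add_diff m R _
    rw [hZnull, add_zero] at h3
    exact lt_of_lt_of_le hpos h3
  have hsub : Z.Subsingleton := by
    intro x hx y hy
    by_contra hxy
    have hfxy : f x ≠ f y := fun h => hxy (hf.injective h)
    have key : ∀ a b : X, a ∈ Z → b ∈ Z → f a < f b → False := by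
      intro a b ha hb hab
      obtain ⟨q, hq1, hq2⟩ := exists_rat_btwn hab
      exact hCsep q a b (Set.mem_iInter.mp ha.2 q) (Set.mem_iInter.mp hb.2 q) hq1 hq2.le
    rcases lt_or_gt_of_ne hfxy with h | h
    · exact key x y hx hy h
    · exact key y x hy hx h
  rcases Set.eq_empty_or_nonempty Z with h | ⟨x, hx⟩
  · rw [h] at hZpos; simp at hZpos
  · have : Z ⊆ {x} := fun y hy => hsub hy hx
    exact absurd (lt_of_lt_of_le hZpos ((measure_mono this).trans (hm x).le)) (lt_irrefl 0)

set_option maxHeartbeats 2000000 in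
lemma my_half2 [MeasurableSpace X] [StandardBorelSpace X] (m k : Measure X) (hk : k ≤ m)
    (hm0 : ∀ x : X, m {x} = 0) {H : Set X} (hH : MeasurableSet H) (hHfin : m H ≠ ∞) :
    ∃ S : Set X, MeasurableSet S ∧ S ⊆ H ∧ m S = m (H \ S) ∧ k S = k (H \ S) := by
  have hks : ∀ s : Set X, k s ≤ m s := fun s => Measure.le_iff'.mp hk s
  have hkH : k H ≠ ∞ := fun h => hHfin (top_le_iff.mp (h ▸ hks H))
  have hhalf : ∀ (mu : Measure X) (S : Set X), MeasurableSet S → S ⊆ H → mu S ≠ ∞ → mu H ≠ ∞ →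
      (mu S).toReal = (mu H).toReal / 2 → mu S = mu (H \ S) := by
    intro mu S hSm hSH hSfin hHf htr
    have hdiff : mu (H \ S) = mu H - mu S := measure_diff hSH hSm.nullMeasurableSet hSfin
    have hfin2 : mu (H \ S) ≠ ∞ := by
      rw [hdiff]
      exact fun h => hHf (by simpa using (ENNReal.sub_eq_top_iff.mp h).1)
    rw [← ENNReal.toReal_eq_toReal_iff' hSfin hfin2, hdiff,
      ENNReal.toReal_sub_of_le (measure_mono hSH) hHf, htr]
    ring
  by_cases hM0 : m H = 0
  · refine ⟨∅, MeasurableSet.empty, empty_subset _, ?_, ?_⟩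
    · simpa [Set.diff_empty] using hM0.symm
    · have hkh : k H = 0 := le_antisymm (hM0 ▸ hks H) zero_le
      simpa [Set.diff_empty] using hkh.symm
  obtain ⟨f, hf⟩ := exists_measurableEmbedding_real X
  set E : ℝ → Set X := fun x => H ∩ f ⁻¹' (Set.Iio x) with hE
  have hEm : ∀ x, MeasurableSet (E x) := fun x => hH.inter (hf.measurable measurableSet_Iio)
  have hEH : ∀ x, E x ⊆ H := fun x => inter_subset_left
  have hEfin : ∀ x, m (E x) ≠ ∞ := fun x h => hHfin (top_le_iff.mp (h ▸ measure_mono (hEH x)))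
  have hkEfin : ∀ x, k (E x) ≠ ∞ := fun x h => hEfin x (top_le_iff.mp (h ▸ hks (E x)))
  have hEmono : Monotone E := fun x y hxy =>
    inter_subset_inter_right _ (preimage_mono (Iio_subset_Iio hxy))
  set A : ℝ → ℝ := fun x => (m (E x)).toReal with hA
  set B : ℝ → ℝ := fun x => (k (E x)).toReal with hB
  set M : ℝ := (m H).toReal with hM
  set K : ℝ := (k H).toReal with hK
  have hMpos : 0 < M := ENNReal.toReal_pos hM0 hHfin
  have hAmono : Monotone A := fun x y hxy =>
    ENNReal.toReal_mono (hEfin y) (measure_mono (hEmono hxy))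
  have hBmono : Monotone B := fun x y hxy =>
    ENNReal.toReal_mono (hkEfin y) (measure_mono (hEmono hxy))
  have hBK : ∀ x, B x ≤ K := fun x => ENNReal.toReal_mono hkH (measure_mono (hEH x))
  have hBA : ∀ x, B x ≤ A x := fun x => ENNReal.toReal_mono (hEfin x) (hks (E x))
  have hB0 : ∀ x, 0 ≤ B x := fun x => ENNReal.toReal_nonneg
  have hAd : ∀ x y, x ≤ y → (m (E y \ E x)).toReal = A y - A x := by
    intro x y hxy
    rw [measure_diff (hEmono hxy) (hEm x).nullMeasurableSet (hEfin x),
      ENNReal.toReal_sub_of_le (measure_mono (hEmono hxy)) (hEfin y)]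
  have hBd : ∀ x y, x ≤ y → (k (E y \ E x)).toReal = B y - B x := by
    intro x y hxy
    rw [measure_diff (hEmono hxy) (hEm x).nullMeasurableSet (hkEfin x),
      ENNReal.toReal_sub_of_le (measure_mono (hEmono hxy)) (hkEfin y)]
  have hBlipA : ∀ x y, x ≤ y → B y - B x ≤ A y - A x := by
    intro x y hxy
    rw [← hAd x y hxy, ← hBd x y hxy]
    refine ENNReal.toReal_mono (fun h => (hEfin y) ?_) (hks _)
    exact top_le_iff.mp (h ▸ measure_mono diff_subset)
  have hsub0 : ∀ s : Set X, s.Subsingleton → m s = 0 := by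
    intro s hs
    rcases hs.eq_empty_or_singleton with h | ⟨x, h⟩
    · simp [h]
    · rw [h]; exact hm0 x
  -- right-continuity along x + 1/(n+1)
  have hA_r : ∀ x : ℝ, Tendsto (fun n : ℕ => A (x + 1 / (n + 1))) atTop (nhds (A x)) := by
    intro x
    have hanti : Antitone fun n : ℕ => E (x + 1 / ((n : ℝ) + 1)) := by
      intro a b hab
      apply hEmono
      have hab' : (a : ℝ) ≤ (b : ℝ) := Nat.cast_le.mpr hab
      have h1 : (1 : ℝ) / ((b : ℝ) + 1) ≤ 1 / ((a : ℝ) + 1) :=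
        one_div_le_one_div_of_le (by positivity) (by linarith)
      linarith
    have hinter : (⋂ n : ℕ, E (x + 1 / ((n : ℝ) + 1))) = H ∩ f ⁻¹' (Set.Iic x) := by
      ext z
      simp only [Set.mem_iInter, hE, Set.mem_inter_iff, Set.mem_preimage, Set.mem_Iio, Set.mem_Iic]
      constructor
      · intro h
        refine ⟨(h 0).1, ?_⟩
        by_contra hgt
        push_neg at hgt
        obtain ⟨n, hn⟩ := exists_nat_one_div_lt (sub_pos.mpr hgt)
        have h2 := (h n).2
        have : (1 : ℝ) / (n + 1) < f z - x := hn
        linarith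
      · rintro ⟨h1, h2⟩ n
        refine ⟨h1, lt_of_le_of_lt h2 ?_⟩
        have : (0 : ℝ) < 1 / ((n : ℝ) + 1) := by positivity
        linarith
    have hmeq : m (H ∩ f ⁻¹' (Set.Iic x)) = m (E x) := by
      have hdec : H ∩ f ⁻¹' (Set.Iic x) = E x ∪ (H ∩ f ⁻¹' {x}) := by
        ext z
        simp only [hE, Set.mem_inter_iff, Set.mem_preimage, Set.mem_Iic, Set.mem_Iio,
          Set.mem_union, Set.mem_singleton_iff]
        constructor
        · rintro ⟨h1, h2⟩
          rcases lt_or_eq_of_le h2 with h | h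
          · exact Or.inl ⟨h1, h⟩
          · exact Or.inr ⟨h1, h⟩
        · rintro (⟨h1, h2⟩ | ⟨h1, h2⟩)
          · exact ⟨h1, h2.le⟩
          · exact ⟨h1, h2.le⟩
      have hnull : m (H ∩ f ⁻¹' {x}) = 0 :=
        hsub0 (H ∩ f ⁻¹' {x}) (fun a ha b hb => hf.injective (ha.2.trans hb.2.symm))
      rw [hdec]
      refine le_antisymm (le_trans (measure_union_le _ _) ?_) (measure_mono subset_union_left)
      simp [hnull]
    have hlim := tendsto_measure_iInter_atTop (μ := m)
      (fun n => (hEm _).nullMeasurableSet) hanti ⟨0, hEfin _⟩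
    rw [hinter, hmeq] at hlim
    exact (ENNReal.tendsto_toReal (hEfin x)).comp hlim
  -- left-continuity along x - 1/(n+1)
  have hA_l : ∀ x : ℝ, Tendsto (fun n : ℕ => A (x - 1 / (n + 1))) atTop (nhds (A x)) := by
    intro x
    have hmono : Monotone fun n : ℕ => E (x - 1 / ((n : ℝ) + 1)) := by
      intro a b hab
      apply hEmono
      have hab' : (a : ℝ) ≤ (b : ℝ) := Nat.cast_le.mpr hab
      have h1 : (1 : ℝ) / ((b : ℝ) + 1) ≤ 1 / ((a : ℝ) + 1) :=
        one_div_le_one_div_of_le (by positivity) (by linarith)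
      linarith
    have hunion : (⋃ n : ℕ, E (x - 1 / ((n : ℝ) + 1))) = E x := by
      ext z
      simp only [Set.mem_iUnion, hE, Set.mem_inter_iff, Set.mem_preimage, Set.mem_Iio]
      constructor
      · rintro ⟨n, h1, h2⟩
        refine ⟨h1, lt_trans h2 ?_⟩
        have : (0 : ℝ) < 1 / ((n : ℝ) + 1) := by positivity
        linarith
      · rintro ⟨h1, h2⟩
        obtain ⟨n, hn⟩ := exists_nat_one_div_lt (sub_pos.mpr h2)
        exact ⟨n, h1, by linarith⟩
    have hlim := tendsto_measure_iUnion_atTop (μ := m) hmono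
    rw [hunion] at hlim
    exact (ENNReal.tendsto_toReal (hEfin x)).comp hlim
  -- A attains values near M and near 0
  have htop : ∀ v, v < M → ∃ x : ℝ, v ≤ A x := by
    intro v hv
    have hunion : (⋃ n : ℕ, E (n : ℝ)) = H := by
      ext z
      simp only [Set.mem_iUnion, hE, Set.mem_inter_iff, Set.mem_preimage, Set.mem_Iio]
      constructor
      · rintro ⟨n, h1, _⟩; exact h1
      · intro h1
        obtain ⟨n, hn⟩ := exists_nat_gt (f z)
        exact ⟨n, h1, hn⟩
    have hmono : Monotone fun n : ℕ => E (n : ℝ) := fun a b hab => hEmono (by exact_mod_cast hab)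
    have hlim := tendsto_measure_iUnion_atTop (μ := m) hmono
    rw [hunion] at hlim
    have hlim2 := (ENNReal.tendsto_toReal hHfin).comp hlim
    obtain ⟨n, hn⟩ := (hlim2.eventually (eventually_ge_nhds hv)).exists
    exact ⟨n, hn⟩
  have hbot : ∀ v, 0 < v → ∃ x : ℝ, A x < v := by
    intro v hv
    have hanti : Antitone fun n : ℕ => E (-(n : ℝ)) := fun a b hab => hEmono (by
      have : (a : ℝ) ≤ b := by exact_mod_cast hab
      linarith)
    have hinter : (⋂ n : ℕ, E (-(n : ℝ))) = ∅ := by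
      ext z
      simp only [Set.mem_iInter, hE, Set.mem_inter_iff, Set.mem_preimage, Set.mem_Iio,
        Set.mem_empty_iff_false, iff_false, not_forall]
      obtain ⟨n, hn⟩ := exists_nat_gt (-(f z))
      exact ⟨n, fun h => absurd h.2 (by linarith)⟩
    have hlim := tendsto_measure_iInter_atTop (μ := m)
      (fun n => (hEm _).nullMeasurableSet) hanti ⟨0, hEfin _⟩
    rw [hinter] at hlim
    simp only [measure_empty] at hlim
    have hlim2 := (ENNReal.tendsto_toReal (by simp : (0:ℝ≥0∞) ≠ ∞)).comp hlim
    simp only [ENNReal.toReal_zero] at hlim2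
    obtain ⟨n, hn⟩ := (hlim2.eventually (eventually_lt_nhds hv)).exists
    exact ⟨-(n:ℝ), hn⟩
  -- the quantile function
  set Q : ℝ → ℝ := fun v => sInf {x | v ≤ A x} with hQ
  have hQspec : ∀ v, 0 < v → v < M → A (Q v) = v := by
    intro v hv0 hvM
    have hne : {x | v ≤ A x}.Nonempty := htop v hvM
    obtain ⟨x₀, hx₀⟩ := hbot v hv0
    have hbdd : BddBelow {x | v ≤ A x} := by
      refine ⟨x₀, fun y hy => ?_⟩
      by_contra hlt
      push_neg at hlt
      exact absurd (le_trans hy (hAmono hlt.le)) (not_le.mpr hx₀)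
    have hge : v ≤ A (Q v) := by
      refine ge_of_tendsto (hA_r (Q v)) (Eventually.of_forall fun n => ?_)
      have hpos : (0:ℝ) < 1 / ((n:ℝ)+1) := by positivity
      have h1 : sInf {x | v ≤ A x} < Q v + 1 / ((n : ℝ) + 1) := by
        simp only [hQ]; linarith
      obtain ⟨y, hy, hy2⟩ := (csInf_lt_iff hbdd hne).mp h1
      exact le_trans hy (hAmono hy2.le)
    have hle : A (Q v) ≤ v := by
      refine le_of_tendsto (hA_l (Q v)) (Eventually.of_forall fun n => ?_)
      have hpos : (0:ℝ) < 1 / ((n:ℝ)+1) := by positivity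
      have h1 : Q v - 1 / ((n : ℝ) + 1) ∉ {x | v ≤ A x} := by
        intro hmem
        have h2 := csInf_le hbdd hmem
        simp only [hQ] at h2
        linarith
      simp only [Set.mem_setOf_eq, not_le] at h1
      exact h1.le
    linarith
  -- point ordering from A-values
  have hQlt : ∀ v w, 0 < v → v < w → w < M → Q v < Q w := by
    intro v w hv hvw hwM
    have h1 : A (Q v) = v := hQspec v hv (lt_trans hvw hwM)
    have h2 : A (Q w) = w := hQspec w (lt_trans hv hvw) hwM
    by_contra hle
    push_neg at hle
    have h3 := hAmono hle
    rw [h1, h2] at h3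
    linarith
  -- B-increments through Q controlled by v-increments
  have hkey : ∀ v w, 0 < v → v ≤ w → w < M →
      0 ≤ B (Q w) - B (Q v) ∧ B (Q w) - B (Q v) ≤ w - v := by
    intro v w hv hvw hwM
    rcases eq_or_lt_of_le hvw with rfl | hlt
    · simp
    · have hq := hQlt v w hv hlt hwM
      refine ⟨by linarith [hBmono hq.le], ?_⟩
      have h3 := hBlipA _ _ hq.le
      rw [hQspec v hv (lt_trans hlt hwM), hQspec w (lt_trans hv hlt) hwM] at h3
      linarith
  -- a sufficient criterion: produce S with both toReal-values equal to half
  have hfinal : ∀ S : Set X, MeasurableSet S → S ⊆ H →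
      (m S).toReal = M / 2 → (k S).toReal = K / 2 →
      ∃ S : Set X, MeasurableSet S ∧ S ⊆ H ∧ m S = m (H \ S) ∧ k S = k (H \ S) := by
    intro S hSm hSH h1 h2
    have hSfin : m S ≠ ∞ := fun h => hHfin (top_le_iff.mp (h ▸ measure_mono hSH))
    have hkSfin : k S ≠ ∞ := fun h => hSfin (top_le_iff.mp (h ▸ hks S))
    exact ⟨S, hSm, hSH, hhalf m S hSm hSH hSfin hHfin h1, hhalf k S hSm hSH hkSfin hkH h2⟩
  -- the median point
  have hM2 : 0 < M / 2 := by linarith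
  have hM2' : M / 2 < M := by linarith
  set τ : ℝ := Q (M / 2) with hτ
  have hAτ : A τ = M / 2 := hQspec (M / 2) hM2 hM2'
  set β : ℝ := B τ with hβ
  rcases lt_trichotomy β (K / 2) with hbK | hbK | hbK
  rotate_left
  · -- β = K/2 : take S = E τ
    exact hfinal (E τ) (hEm τ) (hEH τ) hAτ hbK
  · -- β > K/2
    set c₀ : ℝ := min ((β - K / 2) / 4) (M / 4) with hc₀
    have hc₀pos : 0 < c₀ := lt_min (by linarith) (by linarith)
    have hc₀M : c₀ ≤ M / 4 := min_le_right _ _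
    have hc₀β : c₀ ≤ (β - K / 2) / 4 := min_le_left _ _
    have hintle : c₀ ≤ M / 2 - c₀ := by linarith
    set g : ℝ → ℝ := fun c => B (Q (M / 2 + c)) - B (Q c) with hg
    have hrange : ∀ c ∈ Set.Icc c₀ (M / 2 - c₀), 0 < c ∧ c < M / 2 := by
      rintro c ⟨h1, h2⟩
      exact ⟨lt_of_lt_of_le hc₀pos h1, by linarith⟩
    have hglip : LipschitzOnWith 2 g (Set.Icc c₀ (M / 2 - c₀)) := by
      rw [lipschitzOnWith_iff_dist_le_mul]
      have key : ∀ x ∈ Set.Icc c₀ (M / 2 - c₀), ∀ y ∈ Set.Icc c₀ (M / 2 - c₀), x ≤ y →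
          dist (g x) (g y) ≤ 2 * dist x y := by
        intro x hx y hy hxy
        obtain ⟨hx0, hxM⟩ := hrange x hx
        obtain ⟨hy0, hyM⟩ := hrange y hy
        have hD2 := hkey x y hx0 hxy (by linarith)
        have hD1 := hkey (M / 2 + x) (M / 2 + y) (by linarith) (by linarith) (by linarith)
        have habs : |x - y| = y - x := by
          rw [abs_sub_comm x y]
          exact abs_of_nonneg (by linarith)
        rw [Real.dist_eq, Real.dist_eq, habs, abs_le]
        simp only [hg]
        constructor
        · nlinarith [hD1.1, hD1.2, hD2.1, hD2.2]
        · nlinarith [hD1.1, hD1.2, hD2.1, hD2.2]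
      intro x hx y hy
      have h2 : ((2:NNReal):ℝ) = 2 := by norm_num
      rcases le_total x y with h | h
      · calc dist (g x) (g y) ≤ 2 * dist x y := key x hx y hy h
          _ = ((2:NNReal):ℝ) * dist x y := by rw [h2]
      · calc dist (g x) (g y) = dist (g y) (g x) := dist_comm _ _
          _ ≤ 2 * dist y x := key y hy x hx h
          _ = ((2:NNReal):ℝ) * dist x y := by rw [h2, dist_comm]
    have hgc : ContinuousOn g (Set.Icc c₀ (M / 2 - c₀)) := hglip.continuousOn
    -- endpoint values
    have h_lo : K / 2 < g c₀ := by
      have h1 : B (Q (M / 2 + c₀)) ≥ β := by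
        have := (hkey (M / 2) (M / 2 + c₀) hM2 (by linarith) (by linarith)).1
        rw [← hτ] at this
        linarith
      have h2 : B (Q c₀) ≤ c₀ := by
        have := hBA (Q c₀)
        rw [hQspec c₀ hc₀pos (by linarith)] at this
        linarith
      simp only [hg]
      linarith
    have h_hi : g (M / 2 - c₀) < K / 2 := by
      have h1 : B (Q (M / 2 + (M / 2 - c₀))) ≤ K := hBK _
      have h2 : B (Q (M / 2 - c₀)) ≥ β - c₀ := by
        have := (hkey (M / 2 - c₀) (M / 2) (by linarith) (by linarith) hM2').2
        rw [← hτ] at this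
        linarith
      simp only [hg]
      linarith
    obtain ⟨c, hcmem, hgc2⟩ := intermediate_value_Icc' hintle hgc
      (Set.mem_Icc.mpr ⟨h_hi.le, h_lo.le⟩)
    obtain ⟨hc0, hcM⟩ := hrange c hcmem
    have hord : Q c ≤ Q (M / 2 + c) := (hQlt c (M / 2 + c) hc0 (by linarith) (by linarith)).le
    refine hfinal (E (Q (M / 2 + c)) \ E (Q c)) ((hEm _).diff (hEm _))
      (diff_subset.trans (hEH _)) ?_ ?_
    · rw [hAd _ _ hord, hQspec c hc0 (by linarith),
        hQspec (M / 2 + c) (by linarith) (by linarith)]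
      ring
    · rw [hBd _ _ hord]
      exact hgc2
  · -- β < K/2
    set c₀ : ℝ := min ((K / 2 - β) / 4) (M / 4) with hc₀
    have hc₀pos : 0 < c₀ := lt_min (by linarith) (by linarith)
    have hc₀M : c₀ ≤ M / 4 := min_le_right _ _
    have hc₀β : c₀ ≤ (K / 2 - β) / 4 := min_le_left _ _
    have hintle : c₀ ≤ M / 2 - c₀ := by linarith
    set g : ℝ → ℝ := fun c => B (Q (M / 2 + c)) - B (Q c) with hg
    have hrange : ∀ c ∈ Set.Icc c₀ (M / 2 - c₀), 0 < c ∧ c < M / 2 := by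
      rintro c ⟨h1, h2⟩
      exact ⟨lt_of_lt_of_le hc₀pos h1, by linarith⟩
    have hglip : LipschitzOnWith 2 g (Set.Icc c₀ (M / 2 - c₀)) := by
      rw [lipschitzOnWith_iff_dist_le_mul]
      have key : ∀ x ∈ Set.Icc c₀ (M / 2 - c₀), ∀ y ∈ Set.Icc c₀ (M / 2 - c₀), x ≤ y →
          dist (g x) (g y) ≤ 2 * dist x y := by
        intro x hx y hy hxy
        obtain ⟨hx0, hxM⟩ := hrange x hx
        obtain ⟨hy0, hyM⟩ := hrange y hy
        have hD2 := hkey x y hx0 hxy (by linarith)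
        have hD1 := hkey (M / 2 + x) (M / 2 + y) (by linarith) (by linarith) (by linarith)
        have habs : |x - y| = y - x := by
          rw [abs_sub_comm x y]
          exact abs_of_nonneg (by linarith)
        rw [Real.dist_eq, Real.dist_eq, habs, abs_le]
        simp only [hg]
        constructor
        · nlinarith [hD1.1, hD1.2, hD2.1, hD2.2]
        · nlinarith [hD1.1, hD1.2, hD2.1, hD2.2]
      intro x hx y hy
      have h2 : ((2:NNReal):ℝ) = 2 := by norm_num
      rcases le_total x y with h | h
      · calc dist (g x) (g y) ≤ 2 * dist x y := key x hx y hy h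
          _ = ((2:NNReal):ℝ) * dist x y := by rw [h2]
      · calc dist (g x) (g y) = dist (g y) (g x) := dist_comm _ _
          _ ≤ 2 * dist y x := key y hy x hx h
          _ = ((2:NNReal):ℝ) * dist x y := by rw [h2, dist_comm]
    have hgc : ContinuousOn g (Set.Icc c₀ (M / 2 - c₀)) := hglip.continuousOn
    have h_lo : g c₀ < K / 2 := by
      have h1 : B (Q (M / 2 + c₀)) ≤ β + c₀ := by
        have := (hkey (M / 2) (M / 2 + c₀) hM2 (by linarith) (by linarith)).2
        rw [← hτ] at this
        linarith
      have h2 : 0 ≤ B (Q c₀) := hB0 _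
      simp only [hg]
      linarith
    have h_hi : K / 2 < g (M / 2 - c₀) := by
      have h1 : B (Q (M / 2 + (M / 2 - c₀))) ≥ K - c₀ := by
        have heq : A (Q (M - c₀)) = M - c₀ := hQspec (M - c₀) (by linarith) (by linarith)
        have hd := measure_diff (hEH (Q (M - c₀))) (hEm _).nullMeasurableSet (hkEfin _)
        have h3 : (k (H \ E (Q (M - c₀)))).toReal = K - B (Q (M - c₀)) := by
          rw [hd, ENNReal.toReal_sub_of_le (measure_mono (hEH _)) hkH]
        have h4 : (k (H \ E (Q (M - c₀)))).toReal ≤ (m (H \ E (Q (M - c₀)))).toReal := by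
          refine ENNReal.toReal_mono (fun h => hHfin ?_) (hks _)
          exact top_le_iff.mp (h ▸ measure_mono diff_subset)
        have h5 : (m (H \ E (Q (M - c₀)))).toReal = M - A (Q (M - c₀)) := by
          rw [measure_diff (hEH _) (hEm _).nullMeasurableSet (hEfin _),
            ENNReal.toReal_sub_of_le (measure_mono (hEH _)) hHfin]
        rw [heq] at h5
        have heq2 : M / 2 + (M / 2 - c₀) = M - c₀ := by ring
        rw [heq2]
        linarith
      have h2 : B (Q (M / 2 - c₀)) ≤ β := by
        have hq := hQlt (M / 2 - c₀) (M / 2) (by linarith) (by linarith) hM2'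
        have := hBmono hq.le
        rw [← hτ] at this
        linarith
      simp only [hg]
      linarith
    obtain ⟨c, hcmem, hgc2⟩ := intermediate_value_Icc hintle hgc
      (Set.mem_Icc.mpr ⟨h_lo.le, h_hi.le⟩)
    obtain ⟨hc0, hcM⟩ := hrange c hcmem
    have hord : Q c ≤ Q (M / 2 + c) := (hQlt c (M / 2 + c) hc0 (by linarith) (by linarith)).le
    refine hfinal (E (Q (M / 2 + c)) \ E (Q c)) ((hEm _).diff (hEm _))
      (diff_subset.trans (hEH _)) ?_ ?_
    · rw [hAd _ _ hord, hQspec c hc0 (by linarith),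
        hQspec (M / 2 + c) (by linarith) (by linarith)]
      ring
    · rw [hBd _ _ hord]
      exact hgc2

lemma my_glue [MeasurableSpace X] [StandardBorelSpace X] (m k1 k2 : Measure X)
    (hsum : k1 + k2 = m) (hm0 : ∀ x : X, m {x} = 0)
    {R : Set X} (hR : MeasurableSet R) (hsf : SigmaFinite (m.restrict R)) :
    ∃ S : Set X, MeasurableSet S ∧ S ⊆ R ∧ k1 S = k1 (R \ S) ∧ k2 S = k2 (R \ S) := by
  have hk1m : k1 ≤ m := hsum ▸ Measure.le_add_right le_rfl
  have hk1s : ∀ s : Set X, k1 s ≤ m s := fun s => Measure.le_iff'.mp hk1m s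
  set sp : ℕ → Set X := fun n => disjointed (spanningSets (m.restrict R)) n with hsp
  set Hn : ℕ → Set X := fun n => R ∩ sp n with hHn
  have hspm : ∀ n, MeasurableSet (sp n) :=
    MeasurableSet.disjointed fun n => measurableSet_spanningSets (m.restrict R) n
  have hHnm : ∀ n, MeasurableSet (Hn n) := fun n => hR.inter (hspm n)
  have hHnfin : ∀ n, m (Hn n) ≠ ∞ := by
    intro n
    have h1 : m (Hn n) = m.restrict R (sp n) := by
      rw [Measure.restrict_apply (hspm n), hHn, Set.inter_comm]
    rw [h1]
    exact ((measure_mono (disjointed_subset _ _)).trans_lt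
      (measure_spanningSets_lt_top (m.restrict R) n)).ne
  have hHncover : (⋃ n, Hn n) = R := by
    rw [hHn, ← Set.inter_iUnion, iUnion_disjointed, iUnion_spanningSets, Set.inter_univ]
  have hHndisj : Pairwise (Disjoint on Hn) :=
    pairwise_disjoint_mono (disjoint_disjointed _) fun n => Set.inter_subset_right
  choose Tn hTnm hTnsub hTnm2 hTnk1 using fun n =>
    my_half2 m k1 hk1m hm0 (hHnm n) (hHnfin n)
  have hTnk2 : ∀ n, k2 (Tn n) = k2 (Hn n \ Tn n) := by
    intro n
    have e1 : k1 (Tn n) + k2 (Tn n) = m (Tn n) := by rw [← hsum]; rfl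
    have e2 : k1 (Hn n \ Tn n) + k2 (Hn n \ Tn n) = m (Hn n \ Tn n) := by rw [← hsum]; rfl
    have hfin : k1 (Tn n) ≠ ∞ :=
      fun h => (hHnfin n) (top_le_iff.mp (h ▸ (hk1s (Tn n)).trans (measure_mono (hTnsub n))))
    have : k1 (Tn n) + k2 (Tn n) = k1 (Tn n) + k2 (Hn n \ Tn n) := by
      rw [e1, hTnm2 n, ← e2, hTnk1 n]
    exact (ENNReal.add_right_inj hfin).mp this
  refine ⟨⋃ n, Tn n, MeasurableSet.iUnion hTnm, ?_, ?_, ?_⟩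
  · exact Set.iUnion_subset fun n => (hTnsub n).trans (hHncover ▸ Set.subset_iUnion Hn n)
  all_goals {
    have hTdisj : Pairwise (Disjoint on Tn) :=
      fun i j hij => Set.disjoint_of_subset (hTnsub i) (hTnsub j) (hHndisj hij)
    have hCdisj : Pairwise (Disjoint on fun n => Hn n \ Tn n) :=
      fun i j hij => Set.disjoint_of_subset diff_subset diff_subset (hHndisj hij)
    have hcompl : R \ (⋃ n, Tn n) = ⋃ n, (Hn n \ Tn n) := by
      ext x
      constructor
      · rintro ⟨hxR, hxT⟩
        rw [← hHncover] at hxR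
        obtain ⟨n, hn⟩ := Set.mem_iUnion.mp hxR
        exact Set.mem_iUnion.mpr ⟨n, hn, fun h => hxT (Set.mem_iUnion.mpr ⟨n, h⟩)⟩
      · intro hx
        obtain ⟨n, hn1, hn2⟩ := Set.mem_iUnion.mp hx
        refine ⟨hHncover ▸ Set.mem_iUnion.mpr ⟨n, hn1⟩, fun h => ?_⟩
        obtain ⟨j, hj⟩ := Set.mem_iUnion.mp h
        rcases eq_or_ne j n with rfl | hjn
        · exact hn2 hj
        · exact Set.disjoint_left.mp (hHndisj hjn) (hTnsub j hj) hn1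
    rw [hcompl, measure_iUnion hTdisj hTnm,
      measure_iUnion hCdisj (fun n => (hHnm n).diff (hTnm n))]
    first
    | exact tsum_congr fun n => hTnk1 n
    | exact tsum_congr fun n => hTnk2 n
  }

lemma my_combine [MeasurableSpace X] (mu : Measure X) {A B SA SB : Set X}
    (hAB : Disjoint A B) (hSAm : MeasurableSet SA) (hSBm : MeasurableSet SB)
    (hAm : MeasurableSet A) (hBm : MeasurableSet B) (hSAs : SA ⊆ A) (hSBs : SB ⊆ B)
    (h1 : mu SA = mu (A \ SA)) (h2 : mu SB = mu (B \ SB)) :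
    mu (SA ∪ SB) = mu ((A ∪ B) \ (SA ∪ SB)) := by
  have hset : (A ∪ B) \ (SA ∪ SB) = (A \ SA) ∪ (B \ SB) := by
    ext x
    simp only [Set.mem_diff, Set.mem_union]
    constructor
    · rintro ⟨h | h, hn⟩
      · exact Or.inl ⟨h, fun hc => hn (Or.inl hc)⟩
      · exact Or.inr ⟨h, fun hc => hn (Or.inr hc)⟩
    · rintro (⟨h, hn⟩ | ⟨h, hn⟩)
      · exact ⟨Or.inl h, fun hc => hc.elim hn (fun hc2 => Set.disjoint_left.mp hAB h (hSBs hc2))⟩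
      · exact ⟨Or.inr h, fun hc => hc.elim (fun hc2 => Set.disjoint_left.mp hAB (hSAs hc2) h) hn⟩
  rw [hset, measure_union (Set.disjoint_of_subset hSAs hSBs hAB) hSBm,
    measure_union (Set.disjoint_of_subset diff_subset diff_subset hAB) (hBm.diff hSBm), h1, h2]

lemma my_region [MeasurableSpace X] [StandardBorelSpace X] (nu m k : Measure X) [SigmaFinite nu]
    [SFinite m] [SFinite k] (hk : k ≤ m) (hm0 : ∀ x : X, m {x} = 0) (hk0 : ∀ x : X, k {x} = 0)
    (hn0 : ∀ x : X, nu {x} = 0)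
    {F : Set X} (hF : MeasurableSet F)
    (hmn : ∀ s : Set X, MeasurableSet s → s ⊆ F → (m s = 0 ↔ nu s = 0)) :
    ∃ S : Set X, MeasurableSet S ∧ S ⊆ F ∧ m S = m (F \ S) ∧ k S = k (F \ S) := by
  have hks : ∀ s : Set X, k s ≤ m s := fun s => Measure.le_iff'.mp hk s
  set R3 : Set X := F ∩ m.sigmaFiniteSet with hR3
  set W : Set X := F \ m.sigmaFiniteSet with hW
  set R2 : Set X := W ∩ k.sigmaFiniteSet with hR2
  set R1 : Set X := W \ k.sigmaFiniteSet with hR1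
  have hR3m : MeasurableSet R3 := hF.inter measurableSet_sigmaFiniteSet
  have hWm : MeasurableSet W := hF.diff measurableSet_sigmaFiniteSet
  have hR2m : MeasurableSet R2 := hWm.inter measurableSet_sigmaFiniteSet
  have hR1m : MeasurableSet R1 := hWm.diff measurableSet_sigmaFiniteSet
  have hR3F : R3 ⊆ F := Set.inter_subset_left
  have hR2F : R2 ⊆ F := Set.inter_subset_left.trans diff_subset
  have hR1F : R1 ⊆ F := diff_subset.trans diff_subset
  -- m is 0-∞ on subsets of W
  have hm0inf : ∀ s : Set X, s ⊆ W → m s = 0 ∨ m s = ∞ := fun s hs =>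
    measure_eq_zero_or_top_of_subset_compl_sigmaFiniteSet (hs.trans (fun x hx => hx.2))
  have hk0inf : ∀ s : Set X, s ⊆ R1 → k s = 0 ∨ k s = ∞ := fun s hs =>
    measure_eq_zero_or_top_of_subset_compl_sigmaFiniteSet (hs.trans (fun x hx => hx.2))
  -- Region 3
  have hsf3 : SigmaFinite ((m + k).restrict R3) := by
    have e1 : m.restrict R3 = (m.restrict m.sigmaFiniteSet).restrict R3 := by
      rw [Measure.restrict_restrict hR3m, Set.inter_eq_self_of_subset_left Set.inter_subset_right]
    have i1 : SigmaFinite (m.restrict R3) := by rw [e1]; infer_instance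
    have i2 : SigmaFinite (k.restrict R3) :=
      Measure.sigmaFinite_of_le (m.restrict R3) (Measure.restrict_mono le_rfl hk)
    rw [Measure.restrict_add]
    infer_instance
  obtain ⟨S3, hS3m, hS3s, hS3k, hS3mm⟩ := my_glue (m + k) k m (add_comm k m)
    (fun x => by simp [hm0 x, hk0 x]) hR3m hsf3
  -- Region 2
  have hsf2 : SigmaFinite ((k + nu).restrict R2) := by
    have e1 : k.restrict R2 = (k.restrict k.sigmaFiniteSet).restrict R2 := by
      rw [Measure.restrict_restrict hR2m, Set.inter_eq_self_of_subset_left Set.inter_subset_right]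
    have i1 : SigmaFinite (k.restrict R2) := by rw [e1]; infer_instance
    have i2 : SigmaFinite (nu.restrict R2) := inferInstance
    rw [Measure.restrict_add]
    infer_instance
  obtain ⟨S2, hS2m, hS2s, hS2k, hS2n⟩ := my_glue (k + nu) k nu rfl
    (fun x => by simp [hk0 x, hn0 x]) hR2m hsf2
  have hS2mm : m S2 = m (R2 \ S2) := by
    have hsub1 : S2 ⊆ W := hS2s.trans Set.inter_subset_left
    have hsub2 : R2 \ S2 ⊆ W := diff_subset.trans Set.inter_subset_left
    have hiff : nu S2 = 0 ↔ nu (R2 \ S2) = 0 := by rw [hS2n]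
    rcases hm0inf S2 hsub1 with h1 | h1 <;> rcases hm0inf _ hsub2 with h2 | h2
    · rw [h1, h2]
    · exfalso
      have e1 : nu S2 = 0 := (hmn S2 hS2m (hS2s.trans hR2F)).mp h1
      have e2 : nu (R2 \ S2) = 0 := hiff.mp e1
      have e3 : m (R2 \ S2) = 0 :=
        (hmn _ (hR2m.diff hS2m) (diff_subset.trans hR2F)).mpr e2
      rw [e3] at h2
      simp at h2
    · exfalso
      have e2 : nu (R2 \ S2) = 0 :=
        (hmn _ (hR2m.diff hS2m) (diff_subset.trans hR2F)).mp h2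
      have e1 : nu S2 = 0 := hiff.mpr e2
      have e3 : m S2 = 0 := (hmn S2 hS2m (hS2s.trans hR2F)).mpr e1
      rw [e3] at h1
      simp at h1
    · rw [h1, h2]
  -- Region 1
  have hR1split : ∃ S1 : Set X, MeasurableSet S1 ∧ S1 ⊆ R1 ∧
      m S1 = m (R1 \ S1) ∧ k S1 = k (R1 \ S1) := by
    by_cases hkR1 : k R1 = 0
    · by_cases hnR1 : nu R1 = 0
      · refine ⟨∅, MeasurableSet.empty, Set.empty_subset _, ?_, ?_⟩
        · have : m R1 = 0 := (hmn R1 hR1m hR1F).mpr hnR1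
          simpa [Set.diff_empty] using this.symm
        · have : k (R1 \ ∅) ≤ k R1 := measure_mono diff_subset
          simp only [Set.diff_empty]
          simp [hkR1]
      · obtain ⟨S1, hS1m, hS1s, hS1p, hS1p'⟩ := my_splitpos nu hn0 hR1m (pos_iff_ne_zero.mpr hnR1)
        have hWsub : S1 ⊆ W := hS1s.trans diff_subset
        have hWsub' : R1 \ S1 ⊆ W := diff_subset.trans diff_subset
        refine ⟨S1, hS1m, hS1s, ?_, ?_⟩
        · have e1 : m S1 ≠ 0 := fun h => hS1p.ne' ((hmn S1 hS1m (hS1s.trans hR1F)).mp h)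
          have e2 : m (R1 \ S1) ≠ 0 := fun h =>
            hS1p'.ne' ((hmn _ (hR1m.diff hS1m) (diff_subset.trans hR1F)).mp h)
          rcases hm0inf S1 hWsub with h | h
          · exact absurd h e1
          · rcases hm0inf _ hWsub' with h2 | h2
            · exact absurd h2 e2
            · rw [h, h2]
        · have e1 : k S1 ≤ k R1 := measure_mono hS1s
          have e2 : k (R1 \ S1) ≤ k R1 := measure_mono diff_subset
          rw [hkR1] at e1 e2
          rw [le_antisymm e1 zero_le, le_antisymm e2 zero_le]
    · obtain ⟨S1, hS1m, hS1s, hS1p, hS1p'⟩ := my_splitpos k hk0 hR1m (pos_iff_ne_zero.mpr hkR1)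
      refine ⟨S1, hS1m, hS1s, ?_, ?_⟩
      · have e1 : k S1 = ∞ := (hk0inf S1 hS1s).resolve_left hS1p.ne'
        have e2 : k (R1 \ S1) = ∞ := (hk0inf _ diff_subset).resolve_left hS1p'.ne'
        have f1 : m S1 = ∞ := top_le_iff.mp (e1 ▸ hks S1)
        have f2 : m (R1 \ S1) = ∞ := top_le_iff.mp (e2 ▸ hks _)
        rw [f1, f2]
      · rw [(hk0inf S1 hS1s).resolve_left hS1p.ne',
          (hk0inf _ diff_subset).resolve_left hS1p'.ne']
  obtain ⟨S1, hS1m, hS1s, hS1mm, hS1k⟩ := hR1split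
  -- assemble
  have hd32 : Disjoint R3 R2 := by
    refine Set.disjoint_left.mpr fun x hx hx2 => ?_
    exact (hx2.1.2 : x ∉ m.sigmaFiniteSet) hx.2
  have hd321 : Disjoint (R3 ∪ R2) R1 := by
    refine Set.disjoint_left.mpr fun x hx hx1 => ?_
    rcases hx with hx | hx
    · exact (hx1.1.2 : x ∉ m.sigmaFiniteSet) hx.2
    · exact (hx1.2 : x ∉ k.sigmaFiniteSet) hx.2
  have hcover : R3 ∪ R2 ∪ R1 = F := by
    rw [hR2, hR1, Set.union_assoc, Set.inter_union_diff, hR3, hW, Set.inter_union_diff]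
  have hm32 := my_combine m hd32 hS3m hS2m hR3m hR2m hS3s hS2s hS3mm hS2mm
  have hk32 := my_combine k hd32 hS3m hS2m hR3m hR2m hS3s hS2s hS3k hS2k
  have hmf := my_combine m hd321 (hS3m.union hS2m) hS1m (hR3m.union hR2m) hR1m
    (Set.union_subset_union hS3s hS2s) hS1s hm32 hS1mm
  have hkf := my_combine k hd321 (hS3m.union hS2m) hS1m (hR3m.union hR2m) hR1m
    (Set.union_subset_union hS3s hS2s) hS1s hk32 hS1k
  rw [hcover] at hmf hkf
  refine ⟨S3 ∪ S2 ∪ S1, (hS3m.union hS2m).union hS1m, ?_, hmf, hkf⟩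
  rw [← hcover]
  exact Set.union_subset_union (Set.union_subset_union hS3s hS2s) hS1s

/-- If the `T`-action on `supp T` admits a Borel fundamental domain, then `T` factors as
`T = T₁ T₂`, with `T₁, T₂` in the full group generated by `T`, having disjoint supports of
equal measure meeting `D` in sets of equal measure. -/
theorem factorisation_with_fundamental_domain [MeasurableSpace X] [StandardBorelSpace X]
    (ν : MeasureTheory.Measure X) [SigmaFinite ν] [NullSingletonClass ν]
    (T : X → X) (hT : IsMPBij ν T)
    (hFD : ∃ F : Set X, MeasurableSet F ∧ F ⊆ supp T ∧
      ∀ x ∈ supp T, ∃! y, y ∈ F ∧ sameOrbit T x y)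
    (D : Set X) (hD : MeasurableSet D) (hDpos : 0 < ν D) :
    ∃ T₁ T₂ : X → X, T₁ ∈ fullGroupGen ν T ∧ T₂ ∈ fullGroupGen ν T ∧
      T =ᵐ[ν] T₁ ∘ T₂ ∧ Disjoint (supp T₁) (supp T₂) ∧
      ν (supp T₁) = ν (supp T₂) ∧ ν (supp T₁ ∩ D) = ν (supp T₂ ∩ D) := by
  classical
  obtain ⟨hTme, hTbij, hTmp⟩ := hT
  obtain ⟨F, hFm, hFsub, hFu⟩ := hFD
  have hTinj : Function.Injective T := hTbij.1
  set Ω : Set X := supp T with hΩdef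
  have hΩmem : ∀ x, x ∈ Ω ↔ T x ≠ x := fun x => Iff.rfl
  have hΩm : MeasurableSet Ω := by
    obtain ⟨f, hf⟩ := exists_measurableEmbedding_real X
    have he : Ω = {x | (fun y => f (T y)) x = f x}ᶜ := by
      ext x
      simp only [Set.mem_compl_iff, Set.mem_setOf_eq, hΩmem]
      exact ⟨fun h hc => h (hf.injective hc), fun h hc => h (congrArg f hc)⟩
    rw [he]
    exact (measurableSet_eq_fun (hf.measurable.comp hTme) hf.measurable).compl
  have hΩT : ∀ x, T x ∈ Ω ↔ x ∈ Ω := by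
    intro x
    simp only [hΩmem]
    exact ⟨fun h hc => h (congrArg T hc), fun h hc => h (hTinj hc)⟩
  have hstep : ∀ x y, sameOrbit T x y → sameOrbit T (T x) y := by
    rintro x y ⟨n, h | h⟩
    · match n, h with
      | 0, h =>
        have hxy : x = y := by simpa using h
        exact ⟨1, Or.inr (by simp [hxy])⟩
      | (n + 1), h => exact ⟨n, Or.inl (by rwa [← Function.iterate_succ_apply])⟩
    · exact ⟨n + 1, Or.inr (by rw [Function.iterate_succ_apply', h])⟩
  set rep : X → X := fun x => if hx : x ∈ Ω then (hFu x hx).choose else x with hrepdef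
  have hrepF : ∀ x ∈ Ω, rep x ∈ F ∧ sameOrbit T x (rep x) := by
    intro x hx
    simp only [hrepdef, dif_pos hx]
    exact (hFu x hx).choose_spec.1
  have hrepU : ∀ x ∈ Ω, ∀ y, y ∈ F ∧ sameOrbit T x y → y = rep x := by
    intro x hx y hy
    simp only [hrepdef, dif_pos hx]
    exact (hFu x hx).choose_spec.2 y hy
  have hrepself : ∀ x ∈ F, rep x = x :=
    fun x hx => (hrepU x (hFsub hx) x ⟨hx, ⟨0, Or.inl rfl⟩⟩).symm
  have hrepT : ∀ x ∈ Ω, rep (T x) = rep x := by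
    intro x hx
    exact (hrepU (T x) ((hΩT x).mpr hx) (rep x)
      ⟨(hrepF x hx).1, hstep x _ (hrepF x hx).2⟩).symm
  set satU : Set X → Set X := fun S => ⋃ n : ℕ, ((T^[n]) ⁻¹' S ∪ (T^[n]) '' S) with hsatUdef
  have hiterm : ∀ n : ℕ, Measurable (T^[n]) := fun n => hTme.iterate n
  have hiteremb : ∀ n : ℕ, MeasurableEmbedding (T^[n]) := fun n =>
    (hiterm n).measurableEmbedding (hTinj.iterate n)
  have hsatUm : ∀ S : Set X, MeasurableSet S → MeasurableSet (satU S) := fun S hS =>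
    MeasurableSet.iUnion fun n => ((hiterm n) hS).union ((hiteremb n).measurableSet_image' hS)
  have hpre : ∀ S : Set X, S ⊆ F → rep ⁻¹' S ∩ Ω = Ω ∩ satU S := by
    intro S hSF
    ext x
    simp only [Set.mem_inter_iff, Set.mem_preimage]
    constructor
    · rintro ⟨hxS, hxΩ⟩
      refine ⟨hxΩ, ?_⟩
      obtain ⟨n, h | h⟩ := (hrepF x hxΩ).2
      · exact Set.mem_iUnion.mpr ⟨n, Or.inl (by rw [Set.mem_preimage, h]; exact hxS)⟩
      · exact Set.mem_iUnion.mpr ⟨n, Or.inr ⟨rep x, hxS, h⟩⟩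
    · rintro ⟨hxΩ, hsat⟩
      obtain ⟨n, hn | hn⟩ := Set.mem_iUnion.mp hsat
      · have hmem : T^[n] x ∈ S := hn
        have heq := hrepU x hxΩ (T^[n] x) ⟨hSF hmem, ⟨n, Or.inl rfl⟩⟩
        exact ⟨by rw [← heq]; exact hmem, hxΩ⟩
      · obtain ⟨y, hyS, hyx⟩ := hn
        have heq := hrepU x hxΩ y ⟨hSF hyS, ⟨n, Or.inr hyx⟩⟩
        exact ⟨by rw [← heq]; exact hyS, hxΩ⟩
  have hrepMeas : Measurable rep := by
    intro S hS
    have hform : rep ⁻¹' S = (Ω ∩ satU (S ∩ F)) ∪ (S \ Ω) := by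
      ext x
      by_cases hx : x ∈ Ω
      · have hmemF := (hrepF x hx).1
        constructor
        · intro hxS
          left
          have hmem : x ∈ rep ⁻¹' (S ∩ F) ∩ Ω := ⟨⟨hxS, hmemF⟩, hx⟩
          rw [hpre (S ∩ F) Set.inter_subset_right] at hmem
          exact hmem
        · rintro (hmem | hmem)
          · rw [← hpre (S ∩ F) Set.inter_subset_right] at hmem
            exact hmem.1.1
          · exact absurd hx hmem.2
      · have hrx : rep x = x := by simp only [hrepdef, dif_neg hx]
        constructor
        · intro hxS
          right
          rw [Set.mem_preimage, hrx] at hxS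
          exact ⟨hxS, hx⟩
        · rintro (hmem | hmem)
          · exact absurd hmem.1 hx
          · rw [Set.mem_preimage, hrx]
            exact hmem.1
    rw [hform]
    exact (hΩm.inter (hsatUm _ (hS.inter hFm))).union (hS.diff hΩm)
  set μ : Measure X := (ν.restrict Ω).map rep with hμdef
  set κ : Measure X := (ν.restrict (Ω ∩ D)).map rep with hκdef
  have hμap : ∀ S : Set X, MeasurableSet S → μ S = ν (rep ⁻¹' S ∩ Ω) := by
    intro S hS
    rw [hμdef, Measure.map_apply hrepMeas hS, Measure.restrict_apply (hrepMeas hS)]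
  have hκap : ∀ S : Set X, MeasurableSet S → κ S = ν (rep ⁻¹' S ∩ (Ω ∩ D)) := by
    intro S hS
    rw [hκdef, Measure.map_apply hrepMeas hS, Measure.restrict_apply (hrepMeas hS)]
  haveI : SFinite μ := by rw [hμdef]; infer_instance
  haveI : SFinite κ := by rw [hκdef]; infer_instance
  have hκμ : κ ≤ μ := by
    rw [hμdef, hκdef]
    exact Measure.map_mono (Measure.restrict_mono Set.inter_subset_left le_rfl) hrepMeas
  have hsubnull : ∀ s : Set X, s.Subsingleton → ν s = 0 := fun s hs => hs.measure_zero ν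
  have hsatU_null : ∀ S : Set X, MeasurableSet S → ν S = 0 → ν (satU S) = 0 := by
    intro S hS h0
    refine measure_iUnion_null fun n => measure_union_null ?_ ?_
    · rw [(hTmp.iterate n).measure_preimage hS.nullMeasurableSet]
      exact h0
    · have hpe : (T^[n]) ⁻¹' ((T^[n]) '' S) = S := Set.preimage_image_eq S (hTinj.iterate n)
      calc ν ((T^[n]) '' S)
          = ν ((T^[n]) ⁻¹' ((T^[n]) '' S)) :=
            ((hTmp.iterate n).measure_preimage
              ((hiteremb n).measurableSet_image' hS).nullMeasurableSet).symm
        _ = ν S := by rw [hpe]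
        _ = 0 := h0
  have hsatU_single : ∀ x : X, ν (satU {x}) = 0 := by
    intro x
    refine measure_iUnion_null fun n => measure_union_null ?_ ?_
    · refine hsubnull _ fun a ha b hb => (hTinj.iterate n) ?_
      rw [Set.mem_preimage, Set.mem_singleton_iff] at ha hb
      rw [ha, hb]
    · rw [Set.image_singleton]
      exact measure_singleton _
  have hμ0 : ∀ x : X, μ {x} = 0 := by
    intro x
    rw [hμap {x} (measurableSet_singleton x)]
    by_cases hxF : x ∈ F
    · rw [hpre {x} (Set.singleton_subset_iff.mpr hxF)]
      exact measure_mono_null Set.inter_subset_right (hsatU_single x)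
    · have hempty : rep ⁻¹' {x} ∩ Ω = ∅ := by
        ext z
        simp only [Set.mem_inter_iff, Set.mem_preimage, Set.mem_singleton_iff,
          Set.mem_empty_iff_false, iff_false, not_and]
        intro hz hzΩ
        exact hxF (hz ▸ (hrepF z hzΩ).1)
      rw [hempty, measure_empty]
  have hκ0 : ∀ x : X, κ {x} = 0 := fun x =>
    le_antisymm ((Measure.le_iff'.mp hκμ _).trans (hμ0 x).le) zero_le
  have hν0 : ∀ x : X, ν {x} = 0 := fun x => measure_singleton x
  have hmn : ∀ s : Set X, MeasurableSet s → s ⊆ F → (μ s = 0 ↔ ν s = 0) := by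
    intro s hs hsF
    constructor
    · intro h
      rw [hμap s hs] at h
      refine measure_mono_null (fun x hx => ?_) h
      exact ⟨by rw [Set.mem_preimage, hrepself x (hsF hx)]; exact hx, hFsub (hsF hx)⟩
    · intro h
      rw [hμap s hs, hpre s hsF]
      exact measure_mono_null Set.inter_subset_right (hsatU_null s hs h)
  obtain ⟨S, hSm, hSF, hSμ, hSκ⟩ := my_region ν μ κ hκμ hμ0 hκ0 hν0 hFm hmn
  set A1 : Set X := Ω ∩ rep ⁻¹' S with hA1def
  set A2 : Set X := Ω ∩ rep ⁻¹' (F \ S) with hA2def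
  have hA1m : MeasurableSet A1 := hΩm.inter (hrepMeas hSm)
  have hA2m : MeasurableSet A2 := hΩm.inter (hrepMeas (hFm.diff hSm))
  have hA12 : Disjoint A1 A2 :=
    Set.disjoint_left.mpr fun x h1 h2 => h2.2.2 h1.2
  have hAinv : ∀ U : Set X, ∀ x, T x ∈ Ω ∩ rep ⁻¹' U ↔ x ∈ Ω ∩ rep ⁻¹' U := by
    intro U x
    constructor
    · rintro ⟨h1, h2⟩
      have hxΩ : x ∈ Ω := (hΩT x).mp h1
      exact ⟨hxΩ, by rwa [Set.mem_preimage, ← hrepT x hxΩ]⟩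
    · rintro ⟨h1, h2⟩
      exact ⟨(hΩT x).mpr h1, by rwa [Set.mem_preimage, hrepT x h1]⟩
  have hA1inv : ∀ x, T x ∈ A1 ↔ x ∈ A1 := hAinv S
  have hA2inv : ∀ x, T x ∈ A2 ↔ x ∈ A2 := hAinv (F \ S)
  have hA1union : A1 ∪ A2 = Ω := by
    ext x
    constructor
    · rintro (h | h) <;> exact h.1
    · intro hx
      by_cases h : rep x ∈ S
      · exact Or.inl ⟨hx, h⟩
      · exact Or.inr ⟨hx, (hrepF x hx).1, h⟩
  have hνA1 : ν A1 = μ S := by rw [hμap S hSm, hA1def, Set.inter_comm]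
  have hνA2 : ν A2 = μ (F \ S) := by rw [hμap _ (hFm.diff hSm), hA2def, Set.inter_comm]
  have hνA1D : ν (A1 ∩ D) = κ S := by
    rw [hκap S hSm]
    congr 1
    ext z
    simp only [hA1def, Set.mem_inter_iff, Set.mem_preimage]
    tauto
  have hνA2D : ν (A2 ∩ D) = κ (F \ S) := by
    rw [hκap _ (hFm.diff hSm)]
    congr 1
    ext z
    simp only [hA2def, Set.mem_inter_iff, Set.mem_preimage]
    tauto
  -- the generic piecewise transformation
  have hgen : ∀ A : Set X, MeasurableSet A → A ⊆ Ω → (∀ x, T x ∈ A ↔ x ∈ A) →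
      IsMPBij ν (fun x => if x ∈ A then T x else x) ∧
      (fun x => if x ∈ A then T x else x) ∈ fullGroupGen ν T ∧
      supp (fun x => if x ∈ A then T x else x) = A := by
    intro A hAm hAΩ hAinvA
    set TA : X → X := fun x => if x ∈ A then T x else x with hTAdef
    have hTAmeas : Measurable TA := Measurable.ite hAm hTme measurable_id
    have hTAinj : Function.Injective TA := by
      intro a b hab
      simp only [hTAdef] at hab
      by_cases ha : a ∈ A <;> by_cases hb : b ∈ A
      · rw [if_pos ha, if_pos hb] at hab
        exact hTinj hab
      · rw [if_pos ha, if_neg hb] at hab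
        exact absurd (hab ▸ (hAinvA a).mpr ha) hb
      · rw [if_neg ha, if_pos hb] at hab
        exact absurd (hab ▸ (hAinvA b).mpr hb : a ∈ A) ha
      · rwa [if_neg ha, if_neg hb] at hab
    have hTAsurj : Function.Surjective TA := by
      intro z
      by_cases hz : z ∈ A
      · obtain ⟨w, hw⟩ := hTbij.2 z
        have hwA : w ∈ A := (hAinvA w).mp (hw ▸ hz)
        exact ⟨w, by simp only [hTAdef, if_pos hwA]; exact hw⟩
      · exact ⟨z, by simp only [hTAdef, if_neg hz]⟩
    have hTAmp : MeasurePreserving TA ν ν := by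
      refine ⟨hTAmeas, Measure.ext fun B hB => ?_⟩
      rw [Measure.map_apply hTAmeas hB]
      have hpreB : TA ⁻¹' B = T ⁻¹' (B ∩ A) ∪ (B \ A) := by
        ext x
        simp only [hTAdef, Set.mem_preimage, Set.mem_union, Set.mem_inter_iff, Set.mem_diff]
        by_cases hx : x ∈ A
        · simp only [if_pos hx]
          constructor
          · intro h
            exact Or.inl ⟨h, (hAinvA x).mpr hx⟩
          · rintro (⟨h, _⟩ | ⟨h, hn⟩)
            · exact h
            · exact absurd hx hn
        · simp only [if_neg hx]
          constructor
          · intro h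
            exact Or.inr ⟨h, hx⟩
          · rintro (⟨_, h⟩ | ⟨h, _⟩)
            · exact absurd ((hAinvA x).mp h) hx
            · exact h
      have hdisj : Disjoint (T ⁻¹' (B ∩ A)) (B \ A) := by
        refine Set.disjoint_left.mpr fun x hx1 hx2 => ?_
        exact hx2.2 ((hAinvA x).mp hx1.2)
      rw [hpreB, measure_union hdisj (hB.diff hAm),
        hTmp.measure_preimage (hB.inter hAm).nullMeasurableSet, measure_inter_add_diff B hAm]
    have hTAbij : IsMPBij ν TA := ⟨hTAmeas, ⟨hTAinj, hTAsurj⟩, hTAmp⟩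
    refine ⟨hTAbij, ?_, ?_⟩
    · intro G hG hTG
      obtain ⟨hGsub, hGae, hGglue⟩ := hG
      have hid : id ∈ G := hGsub.2.1
      set As : ℕ → Set X := fun n => if n = 0 then A else if n = 1 then Aᶜ else ∅ with hAsdef
      set Ts : ℕ → X → X := fun n => if n = 0 then T else id with hTsdef
      have hcl : ∀ n x, x ∈ As n → (x ∈ A ∧ n = 0) ∨ (x ∉ A ∧ n = 1) := by
        intro n x hx
        rcases n with _ | n
        · exact Or.inl ⟨by simpa [hAsdef] using hx, rfl⟩
        · rcases n with _ | n
          · exact Or.inr ⟨by simpa [hAsdef] using hx, rfl⟩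
          · simp [hAsdef] at hx
      refine hGglue TA Ts As hTAbij ?_ ?_ ?_ ?_ ?_
      · intro n
        by_cases h : n = 0 <;> simp only [hTsdef, h, if_pos, if_neg, if_true, if_false] <;>
          simp [h, hTG, hid]
      · intro n
        rcases n with _ | n
        · simpa [hAsdef] using hAm
        · rcases n with _ | n
          · simpa [hAsdef] using hAm.compl
          · simp [hAsdef]
      · intro i j hij
        refine Set.disjoint_left.mpr fun x hxi hxj => hij ?_
        rcases hcl i x hxi with ⟨h1, rfl⟩ | ⟨h1, rfl⟩ <;>
          rcases hcl j x hxj with ⟨h2, rfl⟩ | ⟨h2, rfl⟩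
        · rfl
        · exact absurd h1 h2
        · exact absurd h2 h1
        · rfl
      · ext x
        simp only [Set.mem_iUnion, Set.mem_univ, iff_true]
        by_cases h : x ∈ A
        · exact ⟨0, by simpa [hAsdef] using h⟩
        · exact ⟨1, by simpa [hAsdef] using h⟩
      · intro n x hx
        rcases hcl n x hx with ⟨h1, rfl⟩ | ⟨h1, rfl⟩
        · simp [hTsdef, hTAdef, if_pos h1]
        · simp [hTsdef, hTAdef, if_neg h1]
    · ext x
      simp only [supp, Set.mem_setOf_eq, hTAdef]
      by_cases hx : x ∈ A
      · simp only [if_pos hx]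
        exact ⟨fun _ => hx, fun _ => hAΩ hx⟩
      · simp only [if_neg hx]
        exact ⟨fun h => absurd rfl h, fun h => absurd h hx⟩
  obtain ⟨hbij1, hmem1, hsupp1⟩ := hgen A1 hA1m Set.inter_subset_left hA1inv
  obtain ⟨hbij2, hmem2, hsupp2⟩ := hgen A2 hA2m Set.inter_subset_left hA2inv
  refine ⟨_, _, hmem1, hmem2, ?_, ?_, ?_, ?_⟩
  · refine Filter.Eventually.of_forall fun x => ?_
    simp only [Function.comp_apply]
    by_cases h2 : x ∈ A2
    · have hTx2 : T x ∈ A2 := (hA2inv x).mpr h2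
      have hTx1 : T x ∉ A1 := fun hc => Set.disjoint_left.mp hA12 hc hTx2
      rw [if_pos h2, if_neg hTx1]
    · by_cases h1 : x ∈ A1
      · rw [if_neg h2, if_pos h1]
      · have hxΩ : x ∉ Ω := fun h => by
          rw [← hA1union] at h
          rcases h with h | h
          · exact h1 h
          · exact h2 h
        rw [if_neg h2, if_neg h1]
        exact not_not.mp hxΩ
  · rw [hsupp1, hsupp2]
    exact hA12
  · rw [hsupp1, hsupp2, hνA1, hνA2, hSμ]
  · rw [hsupp1, hsupp2, hνA1D, hνA2D, hSκ]
end

section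
/- For every ε > 0 and every conservative T ∈ Aut(X,λ), there exists a periodic T' in the full group [T] generated by T such that λ({x ∈ X : T(x) ≠ T'(x)}) < ε. -/
open MeasureTheory Set Filter Topology Function
open scoped ENNReal symmDiff

variable {X : Type*}

/-- `T` is conservative: every positive-measure set returns under some positive power. -/
def Conservative' [MeasurableSpace X] (ν : MeasureTheory.Measure X) (T : X → X) : Prop :=
  ∀ A : Set X, MeasurableSet A → 0 < ν A → ∃ n : ℕ, 1 ≤ n ∧ 0 < ν (A ∩ T^[n] ⁻¹' A)

set_option linter.unusedSectionVars false
set_option linter.unusedVariables false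

section PeriodicApproxAux

variable {T S : X → X} {A : Set X}

attribute [local instance] Classical.propDecidable

/-- Points whose orbit visits `A` infinitely often, forwards and backwards. -/
def goodSet (T S : X → X) (A : Set X) : Set X :=
  {x | (∀ N : ℕ, ∃ n : ℕ, N ≤ n ∧ T^[n] x ∈ A) ∧ (∀ N : ℕ, ∃ n : ℕ, N ≤ n ∧ S^[n] x ∈ A)}

/-- Number of backward steps to the most recent visit of `A`. -/
noncomputable def retIdx (S : X → X) (A : Set X) (y : X) : ℕ := sInf {i : ℕ | S^[i] y ∈ A}

/-- First positive time of a forward visit to `A`. -/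
noncomputable def perIdx (T : X → X) (A : Set X) (z : X) : ℕ :=
  sInf {n : ℕ | 1 ≤ n ∧ T^[n] z ∈ A}

/-- The periodic approximation to `T`: follow `T`, but when the next point would be in `A`,
jump back to the most recent visit of `A` instead (closing a cycle). -/
noncomputable def perApprox (T S : X → X) (A : Set X) : X → X :=
  fun y => if y ∈ goodSet T S A ∧ T y ∈ A then S^[retIdx S A y] y else T y

/-- Explicit inverse of `perApprox`. -/
noncomputable def perApproxInv (T S : X → X) (A : Set X) : X → X :=
  fun z => if z ∈ goodSet T S A ∧ z ∈ A then T^[perIdx T A z - 1] z else S z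

variable (hST : Function.LeftInverse S T) (hTS : Function.RightInverse S T)

section
include hST

theorem cST (n : ℕ) (x : X) : S^[n] (T^[n] x) = x := (hST.iterate n) x

theorem cST2 {a b : ℕ} (h : a ≤ b) (x : X) : S^[a] (T^[b] x) = T^[b - a] x := by
  conv_lhs => rw [show b = a + (b - a) by omega, Function.iterate_add_apply]
  exact cST hST a _

theorem cST3 {a b : ℕ} (h : b ≤ a) (x : X) : S^[a] (T^[b] x) = S^[a - b] x := by
  conv_lhs => rw [show a = (a - b) + b by omega, Function.iterate_add_apply]
  rw [cST hST b x]

end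

section
include hTS

theorem cTS (n : ℕ) (x : X) : T^[n] (S^[n] x) = x := (hTS.iterate n) x

theorem cTS2 {a b : ℕ} (h : a ≤ b) (x : X) : T^[a] (S^[b] x) = S^[b - a] x := by
  conv_lhs => rw [show b = a + (b - a) by omega, Function.iterate_add_apply]
  exact cTS hTS a _

theorem cTS3 {a b : ℕ} (h : b ≤ a) (x : X) : T^[a] (S^[b] x) = T^[a - b] x := by
  conv_lhs => rw [show a = (a - b) + b by omega, Function.iterate_add_apply]
  rw [cTS hTS b x]

end

include hST hTS

theorem good_T {x : X} (hx : x ∈ goodSet T S A) : T x ∈ goodSet T S A := by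
  obtain ⟨h1, h2⟩ := hx
  constructor
  · intro N
    obtain ⟨n, hn, hA⟩ := h1 (N + 1)
    refine ⟨n - 1, by omega, ?_⟩
    have h : T^[(n-1) + 1] x = T^[n-1] (T x) := Function.iterate_succ_apply T (n-1) x
    rw [show (n-1) + 1 = n by omega] at h
    rwa [← h]
  · intro N
    obtain ⟨n, hn, hA⟩ := h2 N
    refine ⟨n + 1, by omega, ?_⟩
    rw [Function.iterate_succ_apply S n (T x), hST x]
    exact hA

theorem good_S {x : X} (hx : x ∈ goodSet T S A) : S x ∈ goodSet T S A := by
  obtain ⟨h1, h2⟩ := hx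
  constructor
  · intro N
    obtain ⟨n, hn, hA⟩ := h1 N
    refine ⟨n + 1, by omega, ?_⟩
    rw [Function.iterate_succ_apply T n (S x), hTS x]
    exact hA
  · intro N
    obtain ⟨n, hn, hA⟩ := h2 (N + 1)
    refine ⟨n - 1, by omega, ?_⟩
    have h : S^[(n-1) + 1] x = S^[n-1] (S x) := Function.iterate_succ_apply S (n-1) x
    rw [show (n-1) + 1 = n by omega] at h
    rwa [← h]

theorem good_of_T {x : X} (hx : T x ∈ goodSet T S A) : x ∈ goodSet T S A := by
  have := good_S hST hTS hx
  rwa [hST x] at this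

theorem good_iterT (n : ℕ) {x : X} (hx : x ∈ goodSet T S A) : T^[n] x ∈ goodSet T S A := by
  induction n with
  | zero => exact hx
  | succ n ih => rw [Function.iterate_succ_apply' T n x]; exact good_T hST hTS ih

theorem good_iterS (n : ℕ) {x : X} (hx : x ∈ goodSet T S A) : S^[n] x ∈ goodSet T S A := by
  induction n with
  | zero => exact hx
  | succ n ih => rw [Function.iterate_succ_apply' S n x]; exact good_S hST hTS ih

theorem not_good_iterT (n : ℕ) {x : X} (hx : x ∉ goodSet T S A) : T^[n] x ∉ goodSet T S A := by
  intro h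
  exact hx (by
    induction n with
    | zero => exact h
    | succ n ih => exact ih (good_of_T hST hTS (by rwa [← Function.iterate_succ_apply' T n x])))

omit hST hTS

theorem ret_nonempty {y : X} (hy : y ∈ goodSet T S A) : {i : ℕ | S^[i] y ∈ A}.Nonempty := by
  obtain ⟨n, -, h⟩ := hy.2 0
  exact ⟨n, h⟩

theorem ret_spec {y : X} (hy : y ∈ goodSet T S A) : S^[retIdx S A y] y ∈ A :=
  Nat.sInf_mem (ret_nonempty hy)

theorem ret_min {y : X} {i : ℕ} (h : i < retIdx S A y) : S^[i] y ∉ A :=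
  Nat.notMem_of_lt_sInf h

theorem per_nonempty {z : X} (hz : z ∈ goodSet T S A) :
    {n : ℕ | 1 ≤ n ∧ T^[n] z ∈ A}.Nonempty := by
  obtain ⟨n, hn, h⟩ := hz.1 1
  exact ⟨n, hn, h⟩

theorem per_spec {z : X} (hz : z ∈ goodSet T S A) :
    1 ≤ perIdx T A z ∧ T^[perIdx T A z] z ∈ A :=
  Nat.sInf_mem (per_nonempty hz)

theorem per_min {z : X} {n : ℕ} (h1 : 1 ≤ n) (h : n < perIdx T A z) : T^[n] z ∉ A := by
  intro hmem
  exact Nat.notMem_of_lt_sInf h ⟨h1, hmem⟩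

include hST hTS

theorem ret_eq_of {w : X} (hw : w ∈ goodSet T S A) (hwA : w ∈ A) {j : ℕ}
    (hj : j < perIdx T A w) : retIdx S A (T^[j] w) = j := by
  refine le_antisymm (Nat.sInf_le ?_) (le_of_not_gt fun h => ?_)
  · show S^[j] (T^[j] w) ∈ A
    rw [cST hST]; exact hwA
  · have hmem := ret_spec (A := A) (good_iterT hST hTS j hw)
    rw [cST2 hST (le_of_lt h)] at hmem
    exact per_min (by omega) (by omega) hmem

theorem per_eq_of {y : X} (hy : y ∈ goodSet T S A) (hTy : T y ∈ A) :
    perIdx T A (S^[retIdx S A y] y) = retIdx S A y + 1 := by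
  set r := retIdx S A y with hr
  refine le_antisymm (Nat.sInf_le ⟨by omega, ?_⟩) (le_of_not_gt fun h => ?_)
  · rw [cTS3 hTS (by omega)]
    simpa using hTy
  · have hsp := per_spec (T := T) (good_iterS hST hTS r hy)
    have h2 := hsp.2
    rw [cTS2 hTS (show perIdx T A (S^[r] y) ≤ r by omega)] at h2
    exact ret_min (show r - perIdx T A (S^[r] y) < r by omega) h2

theorem ret_lt_per {y : X} (hy : y ∈ goodSet T S A) :
    retIdx S A y < perIdx T A (S^[retIdx S A y] y) := by
  set r := retIdx S A y with hr
  by_contra h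
  push_neg at h
  have hsp := per_spec (T := T) (good_iterS hST hTS r hy)
  have h2 := hsp.2
  rw [cTS2 hTS h] at h2
  exact ret_min (show r - perIdx T A (S^[r] y) < r by omega) h2

omit hST hTS

theorem pa_of_not {x : X} (hx : ¬(x ∈ goodSet T S A ∧ T x ∈ A)) :
    perApprox T S A x = T x := if_neg hx

theorem pa_of {x : X} (hx : x ∈ goodSet T S A ∧ T x ∈ A) :
    perApprox T S A x = S^[retIdx S A x] x := if_pos hx

include hST hTS

theorem pa_iter_tower {w : X} (hw : w ∈ goodSet T S A) (hwA : w ∈ A) :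
    ∀ {j : ℕ}, j < perIdx T A w → (perApprox T S A)^[j] w = T^[j] w := by
  intro j hj
  induction j with
  | zero => simp
  | succ j ih =>
    rw [Function.iterate_succ_apply', ih (by omega), Function.iterate_succ_apply' T]
    apply pa_of_not
    rintro ⟨-, hTA⟩
    rw [← Function.iterate_succ_apply' T] at hTA
    exact per_min (by omega) hj hTA

theorem pa_cycle {w : X} (hw : w ∈ goodSet T S A) (hwA : w ∈ A) :
    (perApprox T S A)^[perIdx T A w] w = w := by
  have hp1 : 1 ≤ perIdx T A w := (per_spec hw).1
  set p := perIdx T A w with hp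
  rw [show p = (p - 1) + 1 by omega, Function.iterate_succ_apply',
    pa_iter_tower hST hTS hw hwA (show p - 1 < p by omega)]
  have hTA : T (T^[p-1] w) ∈ A := by
    rw [← Function.iterate_succ_apply' T, show (p-1).succ = p by omega]
    exact (per_spec hw).2
  rw [pa_of ⟨good_iterT hST hTS _ hw, hTA⟩,
    ret_eq_of hST hTS hw hwA (show p - 1 < p by omega), cST hST]

theorem pa_periodic {y : X} (hy : y ∈ goodSet T S A) :
    ∃ n : ℕ, 1 ≤ n ∧ (perApprox T S A)^[n] y = y := by
  set r := retIdx S A y with hr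
  set w := S^[r] y with hw'
  have hw : w ∈ goodSet T S A := good_iterS hST hTS r hy
  have hwA : w ∈ A := ret_spec hy
  have hrp : r < perIdx T A w := ret_lt_per hST hTS hy
  have hyw : T^[r] w = y := cTS hTS r y
  set p := perIdx T A w with hp
  refine ⟨p, (per_spec hw).1, ?_⟩
  have h1 : (perApprox T S A)^[r] w = y := by
    rw [pa_iter_tower hST hTS hw hwA hrp, hyw]
  calc (perApprox T S A)^[p] y = (perApprox T S A)^[p] ((perApprox T S A)^[r] w) := by
        rw [h1]
    _ = (perApprox T S A)^[p + r] w := (Function.iterate_add_apply _ p r w).symm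
    _ = (perApprox T S A)^[r + p] w := by rw [add_comm]
    _ = (perApprox T S A)^[r] ((perApprox T S A)^[p] w) := Function.iterate_add_apply _ r p w
    _ = (perApprox T S A)^[r] w := by rw [pa_cycle hST hTS hw hwA]
    _ = y := h1

theorem pa_linv : Function.LeftInverse (perApproxInv T S A) (perApprox T S A) := by
  intro y
  by_cases hc : y ∈ goodSet T S A ∧ T y ∈ A
  · rw [pa_of hc]
    have hw : S^[retIdx S A y] y ∈ goodSet T S A := good_iterS hST hTS _ hc.1
    have hwA : S^[retIdx S A y] y ∈ A := ret_spec hc.1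
    show perApproxInv T S A _ = y
    rw [perApproxInv, if_pos ⟨hw, hwA⟩, per_eq_of hST hTS hc.1 hc.2]
    simp only [Nat.add_sub_cancel]
    exact cTS hTS _ y
  · rw [pa_of_not hc]
    show perApproxInv T S A (T y) = y
    rw [perApproxInv, if_neg ?_]
    · exact hST y
    rintro ⟨hg, hA'⟩
    exact hc ⟨good_of_T hST hTS hg, hA'⟩

theorem pa_rinv : Function.RightInverse (perApproxInv T S A) (perApprox T S A) := by
  intro z
  by_cases hc : z ∈ goodSet T S A ∧ z ∈ A
  · show perApprox T S A (perApproxInv T S A z) = z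
    rw [perApproxInv, if_pos hc]
    have hp1 : 1 ≤ perIdx T A z := (per_spec hc.1).1
    set p := perIdx T A z with hp
    have hTy : T (T^[p-1] z) = T^[p] z := by
      rw [← Function.iterate_succ_apply' T, show (p-1).succ = p by omega]
    rw [pa_of ⟨good_iterT hST hTS _ hc.1, by rw [hTy]; exact (per_spec hc.1).2⟩,
      ret_eq_of hST hTS hc.1 hc.2 (show p - 1 < p by omega), cST hST]
  · show perApprox T S A (perApproxInv T S A z) = z
    rw [perApproxInv, if_neg hc]
    rw [pa_of_not ?_]
    · exact hTS z
    rintro ⟨hg, hA'⟩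
    rw [hTS z] at hA'
    refine hc ⟨?_, hA'⟩
    have := good_T hST hTS hg
    rwa [hTS z] at this

theorem pa_bijective : Function.Bijective (perApprox T S A) :=
  Function.bijective_iff_has_inverse.2
    ⟨perApproxInv T S A, pa_linv hST hTS, pa_rinv hST hTS⟩

theorem pa_iter_bad {x : X} (hx : x ∉ goodSet T S A) (n : ℕ) :
    (perApprox T S A)^[n] x = T^[n] x := by
  induction n with
  | zero => simp
  | succ n ih =>
    rw [Function.iterate_succ_apply', ih, Function.iterate_succ_apply' T]
    apply pa_of_not
    rintro ⟨hg, -⟩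
    exact not_good_iterT hST hTS n hx hg

omit hST hTS

/-- The set where `perApprox` differs (potentially) from `T`. -/
def condSet (T S : X → X) (A : Set X) : Set X := goodSet T S A ∩ T ⁻¹' A

/-- The piece of `condSet` where the jump-back has length `n`. -/
def pieceQ (T S : X → X) (A : Set X) (n : ℕ) : Set X :=
  condSet T S A ∩ S^[n] ⁻¹' A ∩ (⋂ i, ⋂ _ : i < n, (S^[i] ⁻¹' A)ᶜ)

theorem mem_condSet {x : X} : x ∈ condSet T S A ↔ x ∈ goodSet T S A ∧ T x ∈ A := Iff.rfl

theorem mem_pieceQ {x : X} {n : ℕ} :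
    x ∈ pieceQ T S A n ↔ x ∈ condSet T S A ∧ retIdx S A x = n := by
  constructor
  · rintro ⟨⟨hc, hS⟩, hmin⟩
    refine ⟨hc, le_antisymm (Nat.sInf_le hS) (le_of_not_gt fun h => ?_)⟩
    have hsp := ret_spec (S := S) (A := A) hc.1
    have := mem_iInter.1 (mem_iInter.1 hmin (retIdx S A x)) h
    exact this hsp
  · rintro ⟨hc, hr⟩
    refine ⟨⟨hc, ?_⟩, ?_⟩
    · rw [← hr]; exact ret_spec hc.1
    · refine mem_iInter.2 fun i => mem_iInter.2 fun hi => ?_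
      exact ret_min (hr ▸ hi)

theorem pieceQ_disjoint {n m : ℕ} (h : n ≠ m) : Disjoint (pieceQ T S A n) (pieceQ T S A m) := by
  rw [Set.disjoint_left]
  intro x hx hx'
  rw [mem_pieceQ] at hx hx'
  exact h (hx.2.symm.trans hx'.2)

theorem pa_eq_on_pieceQ {x : X} {n : ℕ} (hx : x ∈ pieceQ T S A n) :
    perApprox T S A x = S^[n] x := by
  obtain ⟨hc, hr⟩ := mem_pieceQ.1 hx
  rw [pa_of hc, hr]

theorem pa_preimage (t : Set X) :
    (perApprox T S A) ⁻¹' t =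
      ((condSet T S A)ᶜ ∩ T ⁻¹' t) ∪ ⋃ n, pieceQ T S A n ∩ S^[n] ⁻¹' t := by
  ext x
  by_cases hc : x ∈ condSet T S A
  · have hQ : x ∈ pieceQ T S A (retIdx S A x) := mem_pieceQ.2 ⟨hc, rfl⟩
    simp only [mem_preimage, mem_union, mem_inter_iff, mem_compl_iff, mem_iUnion]
    rw [pa_of hc]
    constructor
    · intro h
      exact Or.inr ⟨retIdx S A x, hQ, h⟩
    · rintro (⟨hcc, -⟩ | ⟨n, hn, ht⟩)
      · exact absurd hc hcc
      · rw [(mem_pieceQ.1 hn).2]; exact ht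
  · simp only [mem_preimage, mem_union, mem_inter_iff, mem_compl_iff, mem_iUnion]
    rw [pa_of_not hc]
    constructor
    · intro h; exact Or.inl ⟨hc, h⟩
    · rintro (⟨-, ht⟩ | ⟨n, hn, -⟩)
      · exact ht
      · exact absurd (mem_pieceQ.1 hn).1 hc

include hST hTS

theorem pa_target_decomp (t : Set X) :
    t = ⋃ n, (fun n => Nat.rec (S ⁻¹' ((condSet T S A)ᶜ ∩ T ⁻¹' t))
        (fun m _ => T^[m] ⁻¹' (pieceQ T S A m ∩ S^[m] ⁻¹' t)) n : ℕ → Set X) n := by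
  ext z
  simp only [mem_iUnion]
  constructor
  · intro hz
    by_cases hc : perApproxInv T S A z ∈ condSet T S A
    · set x := perApproxInv T S A z with hx
      have hpz : perApprox T S A x = z := pa_rinv hST hTS z
      set n := retIdx S A x with hn
      have hzx : z = S^[n] x := by rw [← hpz, pa_of hc]
      have hTz : T^[n] z = x := by rw [hzx]; exact cTS hTS n x
      refine ⟨n + 1, ?_⟩
      show T^[n] z ∈ pieceQ T S A n ∩ S^[n] ⁻¹' t
      refine ⟨hTz ▸ mem_pieceQ.2 ⟨hc, rfl⟩, ?_⟩
      show S^[n] (T^[n] z) ∈ t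
      rwa [cST hST]
    · set x := perApproxInv T S A z with hx
      have hpz : perApprox T S A x = z := pa_rinv hST hTS z
      have hz2 : perApprox T S A x = T x := pa_of_not fun h => hc (mem_condSet.2 h)
      refine ⟨0, ?_⟩
      show S z ∈ (condSet T S A)ᶜ ∩ T ⁻¹' t
      have hSz : S z = x := by rw [← hpz, hz2, hST]
      constructor
      · rw [hSz]; exact hc
      · show T (S z) ∈ t
        rw [hTS z]; exact hz
  · rintro ⟨n, hn⟩
    match n with
    | 0 =>
      have : T (S z) ∈ t := hn.2
      rwa [hTS z] at this
    | Nat.succ m =>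
      have : S^[m] (T^[m] z) ∈ t := hn.2
      rwa [cST hST] at this

theorem pa_inv_on_piece0 {t : Set X} {z : X}
    (hz : z ∈ S ⁻¹' ((condSet T S A)ᶜ ∩ T ⁻¹' t)) : perApproxInv T S A z = S z := by
  rw [perApproxInv, if_neg]
  rintro ⟨hg, hA'⟩
  refine hz.1 (mem_condSet.2 ⟨good_S hST hTS hg, ?_⟩)
  rwa [hTS z]

theorem pa_inv_on_pieceS {t : Set X} {m : ℕ} {z : X}
    (hz : z ∈ T^[m] ⁻¹' (pieceQ T S A m ∩ S^[m] ⁻¹' t)) :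
    perApproxInv T S A z = T^[m] z := by
  have hx : T^[m] z ∈ pieceQ T S A m := hz.1
  have h1 : perApprox T S A (T^[m] z) = z := by
    rw [pa_eq_on_pieceQ hx, cST hST]
  conv_lhs => rw [← h1]
  exact pa_linv hST hTS _

theorem pa_target_disjoint (t : Set X) :
    Pairwise (Disjoint on (fun n => Nat.rec (S ⁻¹' ((condSet T S A)ᶜ ∩ T ⁻¹' t))
        (fun m _ => T^[m] ⁻¹' (pieceQ T S A m ∩ S^[m] ⁻¹' t)) n : ℕ → Set X)) := by
  intro i j hij
  rw [Function.onFun, Set.disjoint_left]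
  intro z hzi hzj
  apply hij
  match i, j with
  | 0, 0 => rfl
  | 0, Nat.succ m =>
    exfalso
    have h1 := pa_inv_on_piece0 hST hTS (t := t) hzi
    have h2 := pa_inv_on_pieceS hST hTS (t := t) hzj
    have : S z ∈ condSet T S A := by
      rw [← h1, h2]; exact (mem_pieceQ.1 (hzj.1 : _)).1
    exact hzi.1 this
  | Nat.succ m, 0 =>
    exfalso
    have h1 := pa_inv_on_piece0 hST hTS (t := t) hzj
    have h2 := pa_inv_on_pieceS hST hTS (t := t) hzi
    have : S z ∈ condSet T S A := by
      rw [← h1, h2]; exact (mem_pieceQ.1 (hzi.1 : _)).1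
    exact hzj.1 this
  | Nat.succ m, Nat.succ k =>
    have h1 := pa_inv_on_pieceS hST hTS (t := t) hzi
    have h2 := pa_inv_on_pieceS hST hTS (t := t) hzj
    have hm : perApproxInv T S A z ∈ pieceQ T S A m := h1 ▸ (hzi.1 : _)
    have hk : perApproxInv T S A z ∈ pieceQ T S A k := h2 ▸ (hzj.1 : _)
    have : m = k := by
      by_contra hmk
      exact Set.disjoint_left.1 (pieceQ_disjoint hmk) hm hk
    rw [this]

section MeasureStuff

variable [MeasurableSpace X] {ν : MeasureTheory.Measure X}
variable (hMT : Measurable T) (hMS : Measurable S) (hA : MeasurableSet A)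

omit hST hTS
include hMT hMS hA

theorem measurable_goodSet : MeasurableSet (goodSet T S A) := by
  have h1 : goodSet T S A =
      (⋂ N, ⋃ n, ⋃ _ : N ≤ n, T^[n] ⁻¹' A) ∩ (⋂ N, ⋃ n, ⋃ _ : N ≤ n, S^[n] ⁻¹' A) := by
    ext x
    simp only [goodSet, mem_setOf_eq, mem_inter_iff, mem_iInter, mem_iUnion, mem_preimage]
    constructor
    · rintro ⟨hT, hS⟩
      exact ⟨fun N => (hT N).imp fun n h => ⟨h.1, h.2⟩, fun N => (hS N).imp fun n h => ⟨h.1, h.2⟩⟩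
    · rintro ⟨hT, hS⟩
      exact ⟨fun N => (hT N).imp fun n h => ⟨h.1, h.2⟩, fun N => (hS N).imp fun n h => ⟨h.1, h.2⟩⟩
  rw [h1]
  refine MeasurableSet.inter ?_ ?_ <;>
    exact MeasurableSet.iInter fun N => MeasurableSet.iUnion fun n => MeasurableSet.iUnion
      fun _ => (Measurable.iterate (by assumption) n) hA

theorem measurable_condSet : MeasurableSet (condSet T S A) :=
  (measurable_goodSet hMT hMS hA).inter (hMT hA)

theorem measurable_pieceQ (n : ℕ) : MeasurableSet (pieceQ T S A n) := by
  refine ((measurable_condSet hMT hMS hA).inter ((hMS.iterate n) hA)).inter ?_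
  exact MeasurableSet.iInter fun i => MeasurableSet.iInter fun _ => ((hMS.iterate i) hA).compl

theorem pa_measurable : Measurable (perApprox T S A) := by
  intro t ht
  rw [pa_preimage]
  refine MeasurableSet.union ((measurable_condSet hMT hMS hA).compl.inter (hMT ht)) ?_
  exact MeasurableSet.iUnion fun n =>
    (measurable_pieceQ hMT hMS hA n).inter ((hMS.iterate n) ht)

include hST hTS

theorem pa_measurePreserving (hPT : MeasureTheory.MeasurePreserving T ν ν)
    (hPS : MeasureTheory.MeasurePreserving S ν ν) :
    MeasureTheory.MeasurePreserving (perApprox T S A) ν ν := by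
  refine ⟨pa_measurable hMT hMS hA, ?_⟩
  refine MeasureTheory.Measure.ext fun t ht => ?_
  rw [MeasureTheory.Measure.map_apply (pa_measurable hMT hMS hA) ht, pa_preimage]
  -- the preimage as a disjoint union
  set v : ℕ → Set X := fun n => Nat.rec ((condSet T S A)ᶜ ∩ T ⁻¹' t)
    (fun m _ => pieceQ T S A m ∩ S^[m] ⁻¹' t) n with hv
  have hvmeas : ∀ n, MeasurableSet (v n) := by
    intro n
    match n with
    | 0 => exact (measurable_condSet hMT hMS hA).compl.inter (hMT ht)
    | Nat.succ m => exact (measurable_pieceQ hMT hMS hA m).inter ((hMS.iterate m) ht)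
  have hvdisj : Pairwise (Disjoint on v) := by
    intro i j hij
    rw [Function.onFun, Set.disjoint_left]
    intro z hzi hzj
    apply hij
    match i, j with
    | 0, 0 => rfl
    | 0, Nat.succ m => exact absurd (mem_pieceQ.1 (hzj.1 : _)).1 hzi.1
    | Nat.succ m, 0 => exact absurd (mem_pieceQ.1 (hzi.1 : _)).1 hzj.1
    | Nat.succ m, Nat.succ k =>
      have hm := (mem_pieceQ.1 (hzi.1 : _)).2
      have hk := (mem_pieceQ.1 (hzj.1 : _)).2
      exact congrArg Nat.succ (hm.symm.trans hk)
  have hunion : ((condSet T S A)ᶜ ∩ T ⁻¹' t) ∪ (⋃ n, pieceQ T S A n ∩ S^[n] ⁻¹' t) =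
      ⋃ n, v n := by
    ext z
    simp only [mem_union, mem_iUnion]
    constructor
    · rintro (h | ⟨n, h⟩)
      · exact ⟨0, h⟩
      · exact ⟨n + 1, h⟩
    · rintro ⟨n, h⟩
      match n with
      | 0 => exact Or.inl h
      | Nat.succ m => exact Or.inr ⟨m, h⟩
  rw [hunion, MeasureTheory.measure_iUnion hvdisj hvmeas]
  -- the target as a disjoint union
  set u : ℕ → Set X := fun n => Nat.rec (S ⁻¹' ((condSet T S A)ᶜ ∩ T ⁻¹' t))
    (fun m _ => T^[m] ⁻¹' (pieceQ T S A m ∩ S^[m] ⁻¹' t)) n with hu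
  have humeas : ∀ n, MeasurableSet (u n) := by
    intro n
    match n with
    | 0 => exact hMS ((measurable_condSet hMT hMS hA).compl.inter (hMT ht))
    | Nat.succ m =>
      exact (hMT.iterate m) ((measurable_pieceQ hMT hMS hA m).inter ((hMS.iterate m) ht))
  have ht2 : t = ⋃ n, u n := pa_target_decomp hST hTS t
  have hudisj : Pairwise (Disjoint on u) := pa_target_disjoint hST hTS t
  have hmeq : ∀ n, ν (u n) = ν (v n) := by
    intro n
    match n with
    | 0 => exact hPS.measure_preimage (hvmeas 0).nullMeasurableSet
    | Nat.succ m => exact (hPT.iterate m).measure_preimage (hvmeas (m + 1)).nullMeasurableSet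
  conv_rhs => rw [ht2]
  rw [MeasureTheory.measure_iUnion hudisj humeas]
  exact tsum_congr fun n => (hmeq n).symm

end MeasureStuff

end PeriodicApproxAux


section ConsLemmas

variable [MeasurableSpace X] {ν : MeasureTheory.Measure X} {T S : X → X}

theorem null_of_no_return (hcons : Conservative' ν T) {Z : Set X} (hZ : MeasurableSet Z)
    (h : ∀ n, 1 ≤ n → Z ∩ T^[n] ⁻¹' Z = ∅) : ν Z = 0 := by
  by_contra h0
  obtain ⟨n, hn1, hpos⟩ := hcons Z hZ (pos_iff_ne_zero.2 h0)
  rw [h n hn1] at hpos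
  simp at hpos

theorem cons_of_inverse (hST : Function.LeftInverse S T) (hTS : Function.RightInverse S T)
    (hMT : Measurable T) (hPS : MeasureTheory.MeasurePreserving S ν ν)
    (hcons : Conservative' ν T) : Conservative' ν S := by
  intro Z hZ hpos
  obtain ⟨n, hn1, hp⟩ := hcons Z hZ hpos
  refine ⟨n, hn1, ?_⟩
  have hkey : S^[n] ⁻¹' (Z ∩ T^[n] ⁻¹' Z) = S^[n] ⁻¹' Z ∩ Z := by
    rw [Set.preimage_inter, ← Set.preimage_comp]
    congr 1
    have : T^[n] ∘ S^[n] = id := funext fun x => (hTS.iterate n) x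
    rw [this, Set.preimage_id]
  have := (hPS.iterate n).measure_preimage (hZ.inter ((hMT.iterate n) hZ)).nullMeasurableSet
  rw [hkey] at this
  rw [Set.inter_comm, this]
  exact hp

theorem null_never_return (hcons : Conservative' ν T) (hMT : Measurable T)
    {Z : Set X} (hZ : MeasurableSet Z) :
    ν (Z ∩ ⋂ n, ⋂ _ : 1 ≤ n, (T^[n] ⁻¹' Z)ᶜ) = 0 := by
  apply null_of_no_return hcons
  · exact hZ.inter (MeasurableSet.iInter fun n => MeasurableSet.iInter fun _ =>
      ((hMT.iterate n) hZ).compl)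
  · intro n hn
    rw [Set.eq_empty_iff_forall_notMem]
    rintro x ⟨⟨hxZ, hnever⟩, hxpre⟩
    have h1 : T^[n] x ∈ Z := (Set.mem_preimage.1 hxpre).1
    exact (mem_iInter.1 (mem_iInter.1 hnever n) hn) h1

/-- A.e. point having at least one forward hit of `Z` has infinitely many. -/
theorem null_finitely_many_hits (hcons : Conservative' ν T) (hMT : Measurable T)
    (hPT : MeasureTheory.MeasurePreserving T ν ν) {Z : Set X} (hZ : MeasurableSet Z) :
    ν {x | (∃ n, T^[n] x ∈ Z) ∧ ∃ N, ∀ n, N ≤ n → T^[n] x ∉ Z} = 0 := by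
  classical
  set D := Z ∩ ⋂ n, ⋂ _ : 1 ≤ n, (T^[n] ⁻¹' Z)ᶜ with hD
  have hDmeas : MeasurableSet D := hZ.inter (MeasurableSet.iInter fun n =>
    MeasurableSet.iInter fun _ => ((hMT.iterate n) hZ).compl)
  have hD0 : ν D = 0 := null_never_return hcons hMT hZ
  refine MeasureTheory.measure_mono_null (fun x hx => ?_)
    (MeasureTheory.measure_iUnion_null fun k : ℕ =>
      (by rw [(hPT.iterate k).measure_preimage hDmeas.nullMeasurableSet]; exact hD0 :
        ν (T^[k] ⁻¹' D) = 0))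
  obtain ⟨⟨n₀, hn₀⟩, N, hN⟩ := hx
  have hn₀N : n₀ < N := by
    by_contra h
    exact hN n₀ (by omega) hn₀
  set k := Nat.findGreatest (fun n => T^[n] x ∈ Z) N with hk
  have hkZ : T^[k] x ∈ Z := Nat.findGreatest_spec (P := fun n => T^[n] x ∈ Z) (n := N) (m := n₀) (le_of_lt hn₀N) hn₀
  refine mem_iUnion.2 ⟨k, ?_⟩
  show T^[k] x ∈ D
  refine ⟨hkZ, mem_iInter.2 fun j => mem_iInter.2 fun hj => ?_⟩
  show T^[j] (T^[k] x) ∉ Z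
  rw [← Function.iterate_add_apply]
  intro hmem
  by_cases hjk : j + k ≤ N
  · exact Nat.findGreatest_is_greatest (show k < j + k by omega) hjk hmem
  · exact hN (j + k) (by omega) hmem

end ConsLemmas

section Sweep

variable [MeasurableSpace X] [StandardBorelSpace X] {ν : MeasureTheory.Measure X} {T S : X → X}

theorem sweep_exists (hMT : Measurable T) (hMS : Measurable S)
    (hPT : MeasureTheory.MeasurePreserving T ν ν) (hPS : MeasureTheory.MeasurePreserving S ν ν)
    (hST : Function.LeftInverse S T) (hTS : Function.RightInverse S T)
    (hcons : Conservative' ν T)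
    {Pe : Set X} (hPer : ∀ (x : X) (n : ℕ), 1 ≤ n → T^[n] x = x → x ∈ Pe)
    {F : Set X} (hF' : MeasurableSet (F \ Pe)) (hFfin : ν (F \ Pe) ≠ ⊤)
    {β : ℝ≥0∞} (hβ : 0 < β) :
    ∃ B : Set X, MeasurableSet B ∧ B ⊆ F \ Pe ∧ ν B < β ∧
      ν {x | x ∈ F \ Pe ∧ ∀ n : ℕ, T^[n] x ∉ B} = 0 := by
  classical
  set F' := F \ Pe with hF'def
  obtain ⟨h₀, hemb⟩ := exists_measurableEmbedding_real X
  set h : X → ℝ≥0∞ := fun x => ENNReal.ofReal (Real.arctan (h₀ x) + 2) with hhdef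
  have hh_meas : Measurable h :=
    ENNReal.measurable_ofReal.comp
      ((Real.continuous_arctan.measurable.comp hemb.measurable).add_const 2)
  have harc_pos : ∀ t : ℝ, 0 < Real.arctan t + 2 := fun t => by
    nlinarith [Real.neg_pi_div_two_lt_arctan t, Real.pi_lt_d2]
  have hh_lt : ∀ x, h x < ⊤ := fun x => ENNReal.ofReal_lt_top
  have hh_inj : Function.Injective h := by
    intro x y hxy
    rw [hhdef] at hxy
    rw [ENNReal.ofReal_eq_ofReal_iff (harc_pos _).le (harc_pos _).le] at hxy
    exact hemb.injective (Real.arctan_injective (by linarith))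
  set h' : X → ℝ≥0∞ := fun y => if y ∈ F' then h y else ⊤ with hh'def
  have hh'_meas : Measurable h' := Measurable.ite hF' hh_meas measurable_const
  set g : X → ℝ≥0∞ := fun x => ⨅ n : ℕ, min (h' (T^[n] x)) (h' (S^[n] x)) with hgdef
  have hg_meas : Measurable g := Measurable.iInf fun n =>
    (hh'_meas.comp (hMT.iterate n)).min (hh'_meas.comp (hMS.iterate n))
  have g_le_T : ∀ x n, g x ≤ h' (T^[n] x) := fun x n =>
    (iInf_le _ n).trans (min_le_left _ _)
  have g_le_S : ∀ x n, g x ≤ h' (S^[n] x) := fun x n =>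
    (iInf_le _ n).trans (min_le_right _ _)
  have gT : ∀ x, g (T x) = g x := by
    intro x
    refine le_antisymm (le_iInf fun n => le_min ?_ ?_) (le_iInf fun n => le_min ?_ ?_)
    · match n with
      | 0 =>
        have : S^[1] (T x) = x := by simp [hST x]
        calc g (T x) ≤ h' (S^[1] (T x)) := g_le_S _ 1
          _ = h' x := by rw [this]
          _ = h' (T^[0] x) := rfl
      | Nat.succ m =>
        have : T^[m] (T x) = T^[m+1] x := (Function.iterate_succ_apply T m x).symm
        calc g (T x) ≤ h' (T^[m] (T x)) := g_le_T _ m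
          _ = h' (T^[m+1] x) := by rw [this]
    · have : S^[n+1] (T x) = S^[n] x := by
        rw [Function.iterate_succ_apply S n (T x), hST x]
      calc g (T x) ≤ h' (S^[n+1] (T x)) := g_le_S _ (n+1)
        _ = h' (S^[n] x) := by rw [this]
    · have : T^[n] (T x) = T^[n+1] x := (Function.iterate_succ_apply T n x).symm
      calc g x ≤ h' (T^[n+1] x) := g_le_T _ (n+1)
        _ = h' (T^[n] (T x)) := by rw [this]
    · match n with
      | 0 =>
        calc g x ≤ h' (T^[1] x) := g_le_T _ 1
          _ = h' (S^[0] (T x)) := by simp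
      | Nat.succ m =>
        have : S^[m+1] (T x) = S^[m] x := by
          rw [Function.iterate_succ_apply S m (T x), hST x]
        calc g x ≤ h' (S^[m] x) := g_le_S _ m
          _ = h' (S^[m+1] (T x)) := by rw [this]
  have g_iterT : ∀ n x, g (T^[n] x) = g x := by
    intro n
    induction n with
    | zero => intro x; rfl
    | succ m ih =>
      intro x
      rw [Function.iterate_succ_apply' T m x, gT, ih]
  have g_iterS : ∀ n x, g (S^[n] x) = g x := by
    have gS : ∀ x, g (S x) = g x := by
      intro x
      have h2 := gT (S x)
      rw [hTS x] at h2
      exact h2.symm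
    intro n
    induction n with
    | zero => intro x; rfl
    | succ m ih =>
      intro x
      rw [Function.iterate_succ_apply' S m x, gS, ih]
  have hg_ne_top : ∀ x, x ∈ F' → g x ≠ ⊤ := by
    intro x hx htop
    have h1 : g x ≤ h' (T^[0] x) := g_le_T x 0
    rw [htop, Function.iterate_zero_apply] at h1
    have h2 : h' x = h x := if_pos hx
    rw [h2, top_le_iff] at h1
    exact (hh_lt x).ne h1
  have hpow_ne : ∀ m : ℕ, ((2 : ℝ≥0∞)⁻¹) ^ m ≠ 0 :=
    fun m => pow_ne_zero m (ENNReal.inv_ne_zero.2 ENNReal.ofNat_ne_top)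
  have hpow_ne_top : ∀ m : ℕ, ((2 : ℝ≥0∞)⁻¹) ^ m ≠ ⊤ :=
    fun m => ENNReal.pow_ne_top (ENNReal.inv_ne_top.2 two_ne_zero)
  set Bseq : ℕ → Set X := fun m => F' ∩ {x | h' x < g x + 2⁻¹ ^ m} with hBdef
  have hBmeas : ∀ m, MeasurableSet (Bseq m) := fun m =>
    hF'.inter (measurableSet_lt hh'_meas (hg_meas.add measurable_const))
  have hBsub : ∀ m, Bseq m ⊆ F' := fun m => Set.inter_subset_left
  have hBanti : Antitone Bseq := by
    intro a b hab
    refine Set.inter_subset_inter_right _ fun x hx => ?_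
    have hx' : h' x < g x + 2⁻¹ ^ b := hx
    show h' x < g x + 2⁻¹ ^ a
    exact lt_of_lt_of_le hx' (add_le_add_right
      (pow_le_pow_right_of_le_one' (ENNReal.inv_le_one.2 one_le_two) hab) _)
  have hB0 : ν (F' ∩ {x | h' x ≤ g x}) = 0 := by
    apply null_of_no_return hcons
      (hF'.inter (measurableSet_le hh'_meas hg_meas))
    intro n hn
    rw [Set.eq_empty_iff_forall_notMem]
    rintro x ⟨⟨hxF, hxle⟩, hpre⟩
    obtain ⟨hyF, hyle⟩ := Set.mem_preimage.1 hpre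
    have e2 : g x ≤ h' (T^[n] x) := g_le_T x n
    have e4 : g (T^[n] x) ≤ h' (S^[n] (T^[n] x)) := g_le_S _ n
    rw [cST hST n x] at e4
    have heq : h' x = h' (T^[n] x) :=
      le_antisymm (le_trans hxle e2) (le_trans hyle e4)
    have hx' : h' x = h x := if_pos hxF
    have hy' : h' (T^[n] x) = h (T^[n] x) := if_pos hyF
    rw [hx', hy'] at heq
    have : x = T^[n] x := hh_inj heq
    exact hxF.2 (hPer x n hn this.symm)
  have hInter : (⋂ m, Bseq m) = F' ∩ {x | h' x ≤ g x} := by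
    ext x
    constructor
    · intro hx
      have hxF : x ∈ F' := (mem_iInter.1 hx 0).1
      refine ⟨hxF, ?_⟩
      show h' x ≤ g x
      by_cases hgtop : g x = ⊤
      · rw [hgtop]; exact le_top
      refine ENNReal.le_of_forall_pos_le_add fun ε hε hlt => ?_
      obtain ⟨m, hm⟩ := ENNReal.exists_inv_two_pow_lt
        (show ((ε : ℝ≥0∞)) ≠ 0 by exact_mod_cast hε.ne')
      have h1 : h' x < g x + 2⁻¹ ^ m := (mem_iInter.1 hx m).2
      exact le_trans h1.le (add_le_add_right hm.le _)
    · rintro ⟨hxF, hxle⟩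
      refine mem_iInter.2 fun m => ⟨hxF, ?_⟩
      exact lt_of_le_of_lt hxle (ENNReal.lt_add_right (hg_ne_top x hxF) (hpow_ne m))
  have htend : Tendsto (fun m => ν (Bseq m)) atTop (nhds 0) := by
    have := tendsto_measure_iInter_atTop (μ := ν)
      (fun m => (hBmeas m).nullMeasurableSet) hBanti
      ⟨0, (lt_of_le_of_lt (MeasureTheory.measure_mono (hBsub 0))
        (lt_top_iff_ne_top.2 hFfin)).ne⟩
    rw [hInter, hB0] at this
    exact this
  obtain ⟨m, hm⟩ := (htend.eventually_lt_const hβ).exists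
  refine ⟨Bseq m, hBmeas m, hBsub m, hm, ?_⟩
  -- every point of F' hits Bseq m somewhere on its (two-sided) orbit
  have hits : ∀ x ∈ F', ∃ n : ℕ, T^[n] x ∈ Bseq m ∨ S^[n] x ∈ Bseq m := by
    intro x hx
    have hlt : g x < g x + 2⁻¹ ^ m := ENNReal.lt_add_right (hg_ne_top x hx) (hpow_ne m)
    have hlt2 : (⨅ n : ℕ, min (h' (T^[n] x)) (h' (S^[n] x))) < g x + 2⁻¹ ^ m := hlt
    obtain ⟨n, hn⟩ := iInf_lt_iff.1 hlt2
    have hsum_ne : g x + 2⁻¹ ^ m ≠ ⊤ :=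
      ENNReal.add_ne_top.2 ⟨hg_ne_top x hx, hpow_ne_top m⟩
    rcases min_lt_iff.1 hn with h1 | h2
    · refine ⟨n, Or.inl ?_⟩
      have hyF : T^[n] x ∈ F' := by
        by_contra hyF
        rw [show h' (T^[n] x) = ⊤ from if_neg hyF] at h1
        exact not_top_lt h1
      refine ⟨hyF, ?_⟩
      show h' (T^[n] x) < g (T^[n] x) + 2⁻¹ ^ m
      rw [g_iterT n x]
      exact h1
    · refine ⟨n, Or.inr ?_⟩
      have hyF : S^[n] x ∈ F' := by
        by_contra hyF
        rw [show h' (S^[n] x) = ⊤ from if_neg hyF] at h2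
        exact not_top_lt h2
      refine ⟨hyF, ?_⟩
      show h' (S^[n] x) < g (S^[n] x) + 2⁻¹ ^ m
      rw [g_iterS n x]
      exact h2
  -- a.e. points with only backward hits are null
  set M : Set X := {x | (∃ n, T^[n] x ∈ Bseq m) ∧ ∃ N, ∀ n, N ≤ n → T^[n] x ∉ Bseq m}
    with hMdef
  have hM0 : ν M = 0 := null_finitely_many_hits hcons hMT hPT (hBmeas m)
  have hMmeas : MeasurableSet M := by
    have : M = (⋃ n, T^[n] ⁻¹' (Bseq m)) ∩
        (⋃ N, ⋂ n, ⋂ _ : N ≤ n, (T^[n] ⁻¹' (Bseq m))ᶜ) := by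
      ext x
      simp only [hMdef, mem_setOf_eq, mem_inter_iff, mem_iUnion, mem_iInter, mem_preimage,
        mem_compl_iff]
    rw [this]
    exact (MeasurableSet.iUnion fun n => (hMT.iterate n) (hBmeas m)).inter
      (MeasurableSet.iUnion fun N => MeasurableSet.iInter fun n =>
        MeasurableSet.iInter fun _ => ((hMT.iterate n) (hBmeas m)).compl)
  refine MeasureTheory.measure_mono_null (fun x hx => ?_)
    (MeasureTheory.measure_iUnion_null fun k : ℕ =>
      (by rw [(hPS.iterate k).measure_preimage hMmeas.nullMeasurableSet]; exact hM0 :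
        ν (S^[k] ⁻¹' M) = 0))
  obtain ⟨hxF, hxno⟩ := hx
  obtain ⟨n, hn⟩ := hits x hxF
  rcases hn with h1 | h2
  · exact absurd h1 (hxno n)
  · refine mem_iUnion.2 ⟨n, ?_⟩
    show S^[n] x ∈ M
    refine ⟨⟨0, h2⟩, n, fun j hj hmem => ?_⟩
    rw [cTS3 hTS hj] at hmem
    exact hxno (j - n) hmem

end Sweep


/-- Any conservative `T` is uniformly approximated, within `ε`, by a periodic element of
the full group generated by `T`. -/
theorem periodic_uniformly_dense_in_conservative [MeasurableSpace X] [StandardBorelSpace X]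
    (ν : MeasureTheory.Measure X) [SigmaFinite ν] [NullSingletonClass ν]
    (T : X → X) (hT : IsMPBij ν T) (hcons : Conservative' ν T)
    (ε : ℝ≥0∞) (hε : 0 < ε) :
    ∃ T' ∈ fullGroupGen ν T,
      ν {x | ¬ ∃ n : ℕ, 1 ≤ n ∧ T'^[n] x = x} = 0 ∧
      ν {x | T x ≠ T' x} < ε := by
  classical
  obtain ⟨hMT, hbij, hPT⟩ := hT
  -- the inverse map
  set E := Equiv.ofBijective T hbij with hE
  set S : X → X := ⇑E.symm with hSdef
  have hST : Function.LeftInverse S T := fun x => E.symm_apply_apply x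
  have hTS : Function.RightInverse S T := fun x => E.apply_symm_apply x
  have hemb : MeasurableEmbedding T := hMT.measurableEmbedding hbij.1
  have himg : ∀ t : Set X, S ⁻¹' t = T '' t := by
    intro t
    ext z
    constructor
    · intro hz; exact ⟨S z, hz, hTS z⟩
    · rintro ⟨w, hw, rfl⟩; show S (T w) ∈ t; rwa [hST w]
  have hMS : Measurable S := by
    intro t ht
    rw [himg t]
    exact hemb.measurableSet_image' ht
  have hPS : MeasurePreserving S ν ν := by
    refine ⟨hMS, Measure.ext fun t ht => ?_⟩
    rw [Measure.map_apply hMS ht, himg t,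
      ← hPT.measure_preimage (hemb.measurableSet_image' ht).nullMeasurableSet,
      Set.preimage_image_eq t hbij.1]
  -- the set of periodic points
  set Pe : Set X := {x | ∃ n : ℕ, 1 ≤ n ∧ T^[n] x = x} with hPedef
  have hPer : ∀ x n, 1 ≤ n → T^[n] x = x → x ∈ Pe := fun x n h1 h2 => ⟨n, h1, h2⟩
  have hPemeas : MeasurableSet Pe := by
    obtain ⟨h₀, hemb0⟩ := exists_measurableEmbedding_real X
    have : Pe = ⋃ n, ⋃ _ : 1 ≤ n, {x | h₀ (T^[n] x) = h₀ x} := by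
      ext x
      simp only [hPedef, mem_setOf_eq, mem_iUnion]
      constructor
      · rintro ⟨n, h1, h2⟩; exact ⟨n, h1, by rw [h2]⟩
      · rintro ⟨n, h1, h2⟩; exact ⟨n, h1, hemb0.injective h2⟩
    rw [this]
    exact MeasurableSet.iUnion fun n => MeasurableSet.iUnion fun _ =>
      measurableSet_eq_fun (hemb0.measurable.comp (hMT.iterate n)) hemb0.measurable
  -- the small sweep-out sets
  set c := min ε 1 with hc
  have hc0 : c ≠ 0 := (lt_min hε zero_lt_one).ne'
  have hsw : ∀ i : ℕ, ∃ B : Set X, MeasurableSet B ∧ B ⊆ (spanningSets ν i) \ Pe ∧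
      ν B < c * 2⁻¹ ^ (i + 2) ∧
      ν {x | x ∈ (spanningSets ν i) \ Pe ∧ ∀ n : ℕ, T^[n] x ∉ B} = 0 := by
    intro i
    refine sweep_exists hMT hMS hPT hPS hST hTS hcons hPer
      ((measurableSet_spanningSets ν i).diff hPemeas) ?_ ?_
    · exact ((measure_mono diff_subset).trans_lt (measure_spanningSets_lt_top ν i)).ne
    · exact ENNReal.mul_pos hc0 (pow_ne_zero _ (ENNReal.inv_ne_zero.2 ENNReal.ofNat_ne_top))
  choose B hBmeas hBsub hBlt hBnull using hsw
  set A : Set X := ⋃ i, B i with hAdef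
  have hAmeas : MeasurableSet A := MeasurableSet.iUnion hBmeas
  have hAbound : ν A ≤ c * 2⁻¹ := by
    have h2inv : (2:ℝ≥0∞)⁻¹ * 2 = 1 := ENNReal.inv_mul_cancel two_ne_zero ENNReal.ofNat_ne_top
    calc ν A ≤ ∑' i, ν (B i) := measure_iUnion_le _
      _ ≤ ∑' i : ℕ, c * 2⁻¹ ^ (i + 2) := ENNReal.tsum_le_tsum fun i => (hBlt i).le
      _ = ∑' i : ℕ, (c * 2⁻¹ ^ 2) * 2⁻¹ ^ i := tsum_congr fun i => by ring
      _ = (c * 2⁻¹ ^ 2) * ∑' i : ℕ, 2⁻¹ ^ i := ENNReal.tsum_mul_left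
      _ = (c * 2⁻¹ ^ 2) * (1 - 2⁻¹)⁻¹ := by rw [ENNReal.tsum_geometric]
      _ = c * 2⁻¹ := by
          rw [ENNReal.one_sub_inv_two, inv_inv, sq, mul_assoc, mul_assoc, h2inv, mul_one]
  -- the bad set is null
  set NB : Set X := {x | x ∉ Pe ∧ x ∉ goodSet T S A} with hNBdef
  have hN1 : ν {x | x ∉ Pe ∧ ∀ n : ℕ, T^[n] x ∉ A} = 0 := by
    refine measure_mono_null (fun x hx => ?_) (measure_iUnion_null fun i => hBnull i)
    obtain ⟨hxP, hxno⟩ := hx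
    have hxmem : x ∈ ⋃ i, spanningSets ν i := by rw [iUnion_spanningSets]; trivial
    obtain ⟨i, hi⟩ := mem_iUnion.1 hxmem
    exact mem_iUnion.2 ⟨i, ⟨⟨hi, hxP⟩, fun n hmem => hxno n (mem_iUnion.2 ⟨i, hmem⟩)⟩⟩
  have hN2 : ν {x | (∃ n, T^[n] x ∈ A) ∧ ∃ N, ∀ n, N ≤ n → T^[n] x ∉ A} = 0 :=
    null_finitely_many_hits hcons hMT hPT hAmeas
  set M : Set X := {x | (∃ n, S^[n] x ∈ A) ∧ ∃ N, ∀ n, N ≤ n → S^[n] x ∉ A} with hMdef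
  have hMmeas : MeasurableSet M := by
    have : M = (⋃ n, S^[n] ⁻¹' A) ∩ (⋃ N, ⋂ n, ⋂ _ : N ≤ n, (S^[n] ⁻¹' A)ᶜ) := by
      ext x
      simp only [hMdef, mem_setOf_eq, mem_inter_iff, mem_iUnion, mem_iInter, mem_preimage,
        mem_compl_iff]
    rw [this]
    exact (MeasurableSet.iUnion fun n => (hMS.iterate n) hAmeas).inter
      (MeasurableSet.iUnion fun N => MeasurableSet.iInter fun n =>
        MeasurableSet.iInter fun _ => ((hMS.iterate n) hAmeas).compl)
  have hM0 : ν M = 0 :=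
    null_finitely_many_hits (cons_of_inverse hST hTS hMT hPS hcons) hMS hPS hAmeas
  have hN3 : ν {x | (∃ n, T^[n] x ∈ A) ∧ ∃ N, ∀ n, N ≤ n → S^[n] x ∉ A} = 0 := by
    refine measure_mono_null (fun x hx => ?_) (measure_iUnion_null fun k : ℕ =>
      (by rw [(hPT.iterate k).measure_preimage hMmeas.nullMeasurableSet]; exact hM0 :
        ν (T^[k] ⁻¹' M) = 0))
    obtain ⟨⟨n₀, hn₀⟩, N, hN⟩ := hx
    refine mem_iUnion.2 ⟨n₀, ?_⟩
    show T^[n₀] x ∈ M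
    refine ⟨⟨0, hn₀⟩, N + n₀, fun j hj hmem => ?_⟩
    rw [cST3 hST (by omega)] at hmem
    exact hN (j - n₀) (by omega) hmem
  have hNB : ν NB = 0 := by
    refine measure_mono_null (fun x hx => ?_)
      (measure_union_null hN1 (measure_union_null hN2 hN3))
    obtain ⟨hxP, hxg⟩ := hx
    by_cases hhit : ∃ n : ℕ, T^[n] x ∈ A
    · by_cases hfwd : ∀ N : ℕ, ∃ n : ℕ, N ≤ n ∧ T^[n] x ∈ A
      · have hbwd : ¬ ∀ N : ℕ, ∃ n : ℕ, N ≤ n ∧ S^[n] x ∈ A := fun hb => hxg ⟨hfwd, hb⟩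
        push_neg at hbwd
        obtain ⟨N, hNb⟩ := hbwd
        exact Or.inr (Or.inr ⟨hhit, N, fun n hn => hNb n hn⟩)
      · push_neg at hfwd
        obtain ⟨N, hNb⟩ := hfwd
        exact Or.inr (Or.inl ⟨hhit, N, fun n hn => hNb n hn⟩)
    · push_neg at hhit
      exact Or.inl ⟨hxP, hhit⟩
  -- the approximating map
  refine ⟨perApprox T S A, ?_, ?_, ?_⟩
  · -- membership in the full group generated by T
    intro G hG hTG
    obtain ⟨⟨hgmem, hid, hcomp, hinv⟩, hae, hglue⟩ := hG
    obtain ⟨S₀, hS₀G, hS₀l, hS₀r⟩ := hinv T hTG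
    have hS₀ : S₀ = S := funext fun x => by
      have h1 : S₀ (T (S x)) = S x := hS₀l (S x)
      rwa [hTS x] at h1
    have hSG : S ∈ G := hS₀ ▸ hS₀G
    have hSnG : ∀ n : ℕ, S^[n] ∈ G := by
      intro n
      induction n with
      | zero => rw [Function.iterate_zero]; exact hid
      | succ n ih => rw [Function.iterate_succ]; exact hcomp _ ih _ hSG
    refine hglue (perApprox T S A)
      (fun n => Nat.rec T (fun m _ => S^[m]) n)
      (fun n => Nat.rec ((condSet T S A)ᶜ) (fun m _ => pieceQ T S A m) n)
      ⟨pa_measurable hMT hMS hAmeas, pa_bijective hST hTS,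
        pa_measurePreserving hST hTS hMT hMS hAmeas hPT hPS⟩
      (fun n => ?_) (fun n => ?_) ?_ ?_ (fun n x hx => ?_)
    · match n with
      | 0 => exact hTG
      | Nat.succ m => exact hSnG m
    · match n with
      | 0 => exact (measurable_condSet hMT hMS hAmeas).compl
      | Nat.succ m => exact measurable_pieceQ hMT hMS hAmeas m
    · intro i j hij
      rw [Function.onFun, Set.disjoint_left]
      intro z hzi hzj
      apply hij
      match i, j with
      | 0, 0 => rfl
      | 0, Nat.succ m => exact absurd (mem_pieceQ.1 (hzj : _)).1 hzi
      | Nat.succ m, 0 => exact absurd (mem_pieceQ.1 (hzi : _)).1 hzj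
      | Nat.succ m, Nat.succ k =>
        have hm := (mem_pieceQ.1 (hzi : _)).2
        have hk := (mem_pieceQ.1 (hzj : _)).2
        exact congrArg Nat.succ (hm.symm.trans hk)
    · rw [Set.eq_univ_iff_forall]
      intro x
      by_cases hcx : x ∈ condSet T S A
      · exact mem_iUnion.2 ⟨retIdx S A x + 1, mem_pieceQ.2 ⟨hcx, rfl⟩⟩
      · exact mem_iUnion.2 ⟨0, hcx⟩
    · match n with
      | 0 => exact pa_of_not hx
      | Nat.succ m => exact pa_eq_on_pieceQ hx
  · -- almost every point is periodic
    refine measure_mono_null (fun x hx => ?_) hNB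
    simp only [mem_setOf_eq] at hx
    constructor
    · intro hxPe
      by_cases hxg : x ∈ goodSet T S A
      · exact hx (pa_periodic hST hTS hxg)
      · obtain ⟨n, h1, h2⟩ := hxPe
        exact hx ⟨n, h1, by rw [pa_iter_bad hST hTS hxg n]; exact h2⟩
    · intro hxg
      exact hx (pa_periodic hST hTS hxg)
  · -- the difference set is small
    have hsub : {x | T x ≠ perApprox T S A x} ⊆ T ⁻¹' A := by
      intro x hx
      by_contra hTA
      exact hx (pa_of_not fun h => hTA h.2).symm
    have hfinal : c * 2⁻¹ < ε := by
      rcases le_total ε 1 with h1 | h1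
      · rw [hc, min_eq_left h1]
        have hεtop : ε ≠ ⊤ := (h1.trans_lt ENNReal.one_lt_top).ne
        calc ε * 2⁻¹ = ε / 2 := by rw [div_eq_mul_inv]
          _ < ε := ENNReal.half_lt_self hε.ne' hεtop
      · rw [hc, min_eq_right h1]
        calc (1:ℝ≥0∞) * 2⁻¹ = 2⁻¹ := one_mul _
          _ < 1 := ENNReal.inv_lt_one.2 ENNReal.one_lt_two
          _ ≤ ε := h1
    calc ν {x | T x ≠ perApprox T S A x} ≤ ν (T ⁻¹' A) := measure_mono hsub
      _ = ν A := hPT.measure_preimage hAmeas.nullMeasurableSet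
      _ ≤ c * 2⁻¹ := hAbound
      _ < ε := hfinal
end

section
/- Let T be a conservative aperiodic (respectively ergodic) element of Aut(X,λ) on a standard σ-finite space. For every ε > 0 there exists T_f in the full group [T] generated by T with λ(supp T_f) < ∞, λ({x : T(x) ≠ T_f(x)}) measured by any fixed equivalent probability measure less than ε, and such that the restriction of T_f to its support is aperiodic (respectively ergodic). -/
open MeasureTheory Set Filter Topology Function
open scoped ENNReal symmDiff

variable {X : Type*}

/-- `T` is ergodic as a single transformation of `(X,ν)`. -/
def ErgodicMP [MeasurableSpace X] (ν : MeasureTheory.Measure X) (T : X → X) : Prop :=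
  ∀ A : Set X, MeasurableSet A → ν ((T '' A) ∆ A) = 0 → ν A = 0 ∨ ν Aᶜ = 0

namespace FSAUD

/-- first return time to `B` (junk value `0` when there is no return). -/
noncomputable def retT (T : X → X) (B : Set X) (x : X) : ℕ :=
  sInf {n | 1 ≤ n ∧ T^[n] x ∈ B}

/-- points visiting `B` at arbitrarily large forward times of `T`. -/
def infRet (T : X → X) (B : Set X) : Set X := ⋂ N, ⋃ n, ⋃ _ : N ≤ n, T^[n] ⁻¹' B

/-- points of `B` with infinitely many forward and backward visits to `B`. -/
def coreC (T Ti : X → X) (B : Set X) : Set X := (B ∩ infRet T B) ∩ infRet Ti B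

open Classical in
/-- the induced (first-return) map on the core, identity outside. -/
noncomputable def indMap (T Ti : X → X) (B : Set X) (x : X) : X :=
  if x ∈ coreC T Ti B then T^[retT T B x] x else x

/-- partition of `X`: `pieceA 0` is the complement of the core, `pieceA (n+1)` the set of
core points with first return time `n+1`. -/
def pieceA (T Ti : X → X) (B : Set X) : ℕ → Set X
  | 0 => (coreC T Ti B)ᶜ
  | (n+1) => (coreC T Ti B ∩ T^[n+1] ⁻¹' B) ∩
      ⋂ k, ⋂ _ : 1 ≤ k, ⋂ _ : k < n+1, T^[k] ⁻¹' Bᶜ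

lemma mem_infRet {T : X → X} {B : Set X} {x : X} :
    x ∈ infRet T B ↔ ∀ N, ∃ n, N ≤ n ∧ T^[n] x ∈ B := by
  simp [infRet]

section Basics

variable {T Ti : X → X} {B : Set X} {x y : X}

lemma coreC_subset : coreC T Ti B ⊆ B := fun _ hx => hx.1.1

lemma exists_ret (hx : x ∈ coreC T Ti B) : ∃ n, 1 ≤ n ∧ T^[n] x ∈ B := by
  obtain ⟨n, hn1, hnB⟩ := mem_infRet.1 hx.1.2 1
  exact ⟨n, hn1, hnB⟩

lemma retT_mem (hx : ∃ n, 1 ≤ n ∧ T^[n] x ∈ B) :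
    1 ≤ retT T B x ∧ T^[retT T B x] x ∈ B := Nat.sInf_mem hx

lemma retT_min {k : ℕ} (h1 : 1 ≤ k) (h2 : k < retT T B x) : T^[k] x ∉ B :=
  fun hk => Nat.notMem_of_lt_sInf h2 ⟨h1, hk⟩

lemma retT_le {k : ℕ} (h1 : 1 ≤ k) (hk : T^[k] x ∈ B) : retT T B x ≤ k :=
  Nat.sInf_le ⟨h1, hk⟩

lemma indMap_of_mem (hx : x ∈ coreC T Ti B) : indMap T Ti B x = T^[retT T B x] x := if_pos hx

lemma indMap_of_not_mem (hx : x ∉ coreC T Ti B) : indMap T Ti B x = x := if_neg hx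

lemma supp_indMap_subset : supp (indMap T Ti B) ⊆ coreC T Ti B := by
  intro x hx
  by_contra h
  exact hx (indMap_of_not_mem h)

lemma coreC_maps (hli : Function.LeftInverse Ti T) (hx : x ∈ coreC T Ti B) :
    indMap T Ti B x ∈ coreC T Ti B := by
  obtain ⟨hr1, hrB⟩ := retT_mem (exists_ret hx)
  rw [indMap_of_mem hx]
  refine ⟨⟨hrB, ?_⟩, ?_⟩
  · rw [mem_infRet]
    intro N
    obtain ⟨n, hn, hnB⟩ := mem_infRet.1 hx.1.2 (N + retT T B x)
    refine ⟨n - retT T B x, by omega, ?_⟩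
    rw [← Function.iterate_add_apply, Nat.sub_add_cancel (by omega)]
    exact hnB
  · rw [mem_infRet]
    intro N
    obtain ⟨n, hn, hnB⟩ := mem_infRet.1 hx.2 N
    refine ⟨n + retT T B x, by omega, ?_⟩
    rw [Function.iterate_add_apply]
    rw [(hli.iterate (retT T B x)) x]
    exact hnB

lemma aux_inj (hli : Function.LeftInverse Ti T) (hx : x ∈ coreC T Ti B) (hy : y ∈ coreC T Ti B)
    (hab : retT T B x ≤ retT T B y) (h : T^[retT T B x] x = T^[retT T B y] y) : x = y := by
  have ha := retT_mem (exists_ret hx)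
  have hb := retT_mem (exists_ret hy)
  have hxy : x = T^[retT T B y - retT T B x] y := by
    have h1 : T^[retT T B y] y = T^[retT T B x] (T^[retT T B y - retT T B x] y) := by
      rw [← Function.iterate_add_apply, Nat.add_sub_cancel' hab]
    have h2 := congrArg (Ti^[retT T B x]) (h.trans h1)
    have e1 := (hli.iterate (retT T B x)) x
    have e2 := (hli.iterate (retT T B x)) (T^[retT T B y - retT T B x] y)
    rw [e1, e2] at h2
    exact h2
  rcases eq_or_lt_of_le hab with heq | hlt
  · rw [hxy, heq, Nat.sub_self, Function.iterate_zero_apply]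
  · exfalso
    have hxB : T^[retT T B y - retT T B x] y ∈ B := by rw [← hxy]; exact hx.1.1
    exact retT_min (by omega) (by omega) hxB

lemma indMap_surj_aux (hli : Function.LeftInverse Ti T) (hri : Function.RightInverse Ti T)
    (hy : y ∈ coreC T Ti B) :
    ∃ x ∈ coreC T Ti B, indMap T Ti B x = y := by
  have hyB : y ∈ B := hy.1.1
  have hne : ∃ n, 1 ≤ n ∧ Ti^[n] y ∈ B := by
    obtain ⟨n, hn, hnB⟩ := mem_infRet.1 hy.2 1
    exact ⟨n, hn, hnB⟩
  obtain ⟨hm1, hmB⟩ := retT_mem (T := Ti) hne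
  set m := retT Ti B y with hmdef
  set x := Ti^[m] y with hxdef
  have hTx : T^[m] x = y := (hri.iterate m) y
  have hxB : x ∈ B := hmB
  have hxF : x ∈ infRet T B := by
    rw [mem_infRet]; intro N
    obtain ⟨k, hk, hkB⟩ := mem_infRet.1 hy.1.2 N
    refine ⟨k + m, by omega, ?_⟩
    rw [Function.iterate_add_apply, hTx]
    exact hkB
  have hxFb : x ∈ infRet Ti B := by
    rw [mem_infRet]; intro N
    obtain ⟨k, hk, hkB⟩ := mem_infRet.1 hy.2 (N + m)
    refine ⟨k - m, by omega, ?_⟩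
    rw [hxdef, ← Function.iterate_add_apply, Nat.sub_add_cancel (by omega)]
    exact hkB
  have hxC : x ∈ coreC T Ti B := ⟨⟨hxB, hxF⟩, hxFb⟩
  have hrt : retT T B x = m := by
    have hle : retT T B x ≤ m := retT_le hm1 (by rw [hTx]; exact hyB)
    rcases Nat.lt_or_ge (retT T B x) m with hlt | hge
    · exfalso
      obtain ⟨h1, h2⟩ := retT_mem (exists_ret hxC)
      set a := retT T B x with hadef
      have h3 : a + (m - a) = m := by omega
      have h4 : x = Ti^[a] (Ti^[m - a] y) := by
        rw [hxdef, ← Function.iterate_add_apply, h3]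
      have key : T^[a] x = Ti^[m - a] y := by
        rw [h4]
        exact (hri.iterate a) _
      rw [key] at h2
      have h5 : m - a < retT Ti B y := by rw [← hmdef]; omega
      exact retT_min (T := Ti) (by omega) h5 h2
    · exact le_antisymm hle hge
  exact ⟨x, hxC, by rw [indMap_of_mem hxC, hrt, hTx]⟩

lemma indMap_bijective (hli : Function.LeftInverse Ti T) (hri : Function.RightInverse Ti T) :
    Function.Bijective (indMap T Ti B) := by
  constructor
  · intro x y hxy
    by_cases hx : x ∈ coreC T Ti B <;> by_cases hy : y ∈ coreC T Ti B
    · rw [indMap_of_mem hx, indMap_of_mem hy] at hxy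
      rcases le_total (retT T B x) (retT T B y) with h | h
      · exact aux_inj hli hx hy h hxy
      · exact (aux_inj hli hy hx h hxy.symm).symm
    · exfalso
      have h1 := coreC_maps hli hx
      rw [hxy, indMap_of_not_mem hy] at h1
      exact hy h1
    · exfalso
      have h1 := coreC_maps hli hy
      rw [← hxy, indMap_of_not_mem hx] at h1
      exact hx h1
    · rwa [indMap_of_not_mem hx, indMap_of_not_mem hy] at hxy
  · intro y
    by_cases hy : y ∈ coreC T Ti B
    · obtain ⟨x, _, hx2⟩ := indMap_surj_aux hli hri hy
      exact ⟨x, hx2⟩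
    · exact ⟨y, indMap_of_not_mem hy⟩

lemma mem_pieceA_succ {n : ℕ} :
    x ∈ pieceA T Ti B (n+1) ↔ x ∈ coreC T Ti B ∧ retT T B x = n + 1 := by
  simp only [pieceA, mem_inter_iff, mem_iInter, mem_preimage, mem_compl_iff]
  constructor
  · rintro ⟨⟨hC, hB'⟩, hmin⟩
    refine ⟨hC, le_antisymm (retT_le (by omega) hB') ?_⟩
    by_contra h
    push_neg at h
    obtain ⟨h1, h2⟩ := retT_mem (exists_ret hC)
    exact hmin _ h1 (by omega) h2
  · rintro ⟨hC, hrt⟩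
    obtain ⟨h1, h2⟩ := retT_mem (exists_ret hC)
    refine ⟨⟨hC, by rw [← hrt]; exact h2⟩, ?_⟩
    intro k hk1 hk2
    exact retT_min hk1 (by omega)

lemma mem_pieceA_ret (hx : x ∈ coreC T Ti B) : x ∈ pieceA T Ti B (retT T B x) := by
  obtain ⟨h1, _⟩ := retT_mem (exists_ret hx)
  obtain ⟨m, hm⟩ : ∃ m, retT T B x = m + 1 := ⟨retT T B x - 1, by omega⟩
  rw [hm]
  exact mem_pieceA_succ.2 ⟨hx, hm⟩

lemma pieceA_disjoint : Pairwise (Disjoint on pieceA T Ti B) := by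
  intro i j hij
  simp only [Function.onFun]
  rw [Set.disjoint_left]
  intro x hxi hxj
  match i, j with
  | 0, 0 => exact hij rfl
  | 0, (n+1) => exact hxi (mem_pieceA_succ.1 hxj).1
  | (m+1), 0 => exact hxj (mem_pieceA_succ.1 hxi).1
  | (m+1), (n+1) =>
    obtain ⟨_, h1⟩ := mem_pieceA_succ.1 hxi
    obtain ⟨_, h2⟩ := mem_pieceA_succ.1 hxj
    exact hij (by omega)

lemma iUnion_pieceA : ⋃ n, pieceA T Ti B n = univ := by
  refine eq_univ_of_forall fun x => mem_iUnion.2 ?_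
  by_cases hx : x ∈ coreC T Ti B
  · exact ⟨retT T B x, mem_pieceA_ret hx⟩
  · exact ⟨0, hx⟩

lemma indMap_eq_pieceA : ∀ n, ∀ x ∈ pieceA T Ti B n, indMap T Ti B x = T^[n] x := by
  rintro (_ | n) x hx
  · rw [indMap_of_not_mem hx, Function.iterate_zero_apply]
  · obtain ⟨hC, hr⟩ := mem_pieceA_succ.1 hx
    rw [indMap_of_mem hC, hr]

lemma indMap_preimage (S : Set X) :
    indMap T Ti B ⁻¹' S = ⋃ n, (pieceA T Ti B n ∩ T^[n] ⁻¹' S) := by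
  ext x
  simp only [mem_preimage, mem_iUnion, mem_inter_iff]
  constructor
  · intro hx
    by_cases hC : x ∈ coreC T Ti B
    · exact ⟨retT T B x, mem_pieceA_ret hC, by rwa [← indMap_of_mem hC]⟩
    · refine ⟨0, hC, ?_⟩
      rw [Function.iterate_zero_apply]
      rwa [← indMap_of_not_mem hC]
  · rintro ⟨n, hxA, hxS⟩
    rwa [indMap_eq_pieceA n x hxA]

end Basics

section Meas

variable [MeasurableSpace X] {T Ti : X → X} {B : Set X} {ν : MeasureTheory.Measure X}

lemma measurableSet_infRet (hTm : Measurable T) (hB : MeasurableSet B) :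
    MeasurableSet (infRet T B) :=
  .iInter fun _ => .iUnion fun n => .iUnion fun _ => (hTm.iterate n) hB

lemma measurableSet_coreC (hTm : Measurable T) (hTim : Measurable Ti) (hB : MeasurableSet B) :
    MeasurableSet (coreC T Ti B) :=
  (hB.inter (measurableSet_infRet hTm hB)).inter (measurableSet_infRet hTim hB)

lemma measurableSet_pieceA (hTm : Measurable T) (hTim : Measurable Ti) (hB : MeasurableSet B) :
    ∀ n, MeasurableSet (pieceA T Ti B n)
  | 0 => (measurableSet_coreC hTm hTim hB).compl
  | (n+1) => ((measurableSet_coreC hTm hTim hB).inter ((hTm.iterate (n+1)) hB)).inter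
      (.iInter fun k => .iInter fun _ => .iInter fun _ => (hTm.iterate k) hB.compl)

lemma indMap_measurable (hTm : Measurable T) (hTim : Measurable Ti) (hB : MeasurableSet B) :
    Measurable (indMap T Ti B) := by
  intro S hS
  rw [indMap_preimage]
  exact .iUnion fun n => (measurableSet_pieceA hTm hTim hB n).inter ((hTm.iterate n) hS)

lemma measure_image_of_mp [StandardBorelSpace X] {f : X → X}
    (hm : Measurable f) (hinj : Function.Injective f) (hmp : MeasurePreserving f ν ν)
    {S : Set X} (hS : MeasurableSet S) : ν (f '' S) = ν S := by
  have hemb : MeasurableEmbedding f := hm.measurableEmbedding hinj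
  have h1 : ν (f ⁻¹' (f '' S)) = ν (f '' S) :=
    hmp.measure_preimage (hemb.measurableSet_image' hS).nullMeasurableSet
  rw [Set.preimage_image_eq _ hinj] at h1
  exact h1.symm

lemma indMap_measurePreserving [StandardBorelSpace X]
    (hTm : Measurable T) (hTim : Measurable Ti)
    (hli : Function.LeftInverse Ti T) (hri : Function.RightInverse Ti T)
    (hmp : MeasurePreserving T ν ν) (hB : MeasurableSet B) :
    MeasurePreserving (indMap T Ti B) ν ν := by
  have hMm : Measurable (indMap T Ti B) := indMap_measurable hTm hTim hB
  have hinj : Function.Injective T := hli.injective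
  have hIinj : Function.Injective (indMap T Ti B) := (indMap_bijective hli hri).injective
  have hpm : ∀ n, MeasurableSet (pieceA T Ti B n) := measurableSet_pieceA hTm hTim hB
  have hdisj : Pairwise (Disjoint on pieceA T Ti B) := pieceA_disjoint
  have himg : ∀ n, T^[n] '' pieceA T Ti B n = indMap T Ti B '' pieceA T Ti B n := fun n =>
    Set.image_congr fun x hx => (indMap_eq_pieceA n x hx).symm
  refine ⟨hMm, Measure.ext fun S hS => ?_⟩
  rw [Measure.map_apply hMm hS, indMap_preimage]
  rw [measure_iUnion
    (fun i j hij => ((hdisj hij).mono inter_subset_left inter_subset_left))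
    (fun n => (hpm n).inter ((hTm.iterate n) hS))]
  have hterm : ∀ n, ν (pieceA T Ti B n ∩ T^[n] ⁻¹' S) = ν (T^[n] '' pieceA T Ti B n ∩ S) := by
    intro n
    rw [← Set.image_inter_preimage]
    exact (measure_image_of_mp (hTm.iterate n) (hinj.iterate n) (hmp.iterate n)
      ((hpm n).inter ((hTm.iterate n) hS))).symm
  rw [tsum_congr hterm]
  have hmeas2 : ∀ n, MeasurableSet (T^[n] '' pieceA T Ti B n ∩ S) := fun n =>
    (((hTm.iterate n).measurableEmbedding (hinj.iterate n)).measurableSet_image' (hpm n)).inter hS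
  have hdisj2 : Pairwise (Disjoint on fun n => T^[n] '' pieceA T Ti B n ∩ S) := by
    intro i j hij
    simp only [Function.onFun, himg]
    exact (((Set.disjoint_image_iff hIinj).2 (hdisj hij)).mono inter_subset_left
      inter_subset_left)
  rw [← measure_iUnion hdisj2 hmeas2]
  have huniv : (⋃ n, T^[n] '' pieceA T Ti B n) = univ := by
    rw [iUnion_congr himg, ← Set.image_iUnion, iUnion_pieceA, Set.image_univ,
      Set.range_eq_univ.2 (indMap_bijective hli hri).surjective]
  rw [← Set.iUnion_inter, huniv, Set.univ_inter]

/-- Halmos recurrence: a.e. point of `B` visits `B` at arbitrarily large times. -/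
lemma ae_infRet {S : X → X} (hSm : Measurable S)
    (hmp : MeasurePreserving S ν ν) (hcons : Conservative' ν S)
    {B : Set X} (hB : MeasurableSet B) : ν (B \ infRet S B) = 0 := by
  classical
  set A0 := B ∩ ⋂ n, ⋂ _ : 1 ≤ n, S^[n] ⁻¹' Bᶜ with hA0
  have hA0m : MeasurableSet A0 :=
    hB.inter (.iInter fun n => .iInter fun _ => (hSm.iterate n) hB.compl)
  have hA0null : ν A0 = 0 := by
    by_contra h
    obtain ⟨n, hn1, hpos⟩ := hcons A0 hA0m (pos_iff_ne_zero.2 h)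
    have hempty : A0 ∩ S^[n] ⁻¹' A0 = ∅ := by
      ext x
      simp only [mem_inter_iff, mem_empty_iff_false, iff_false, not_and]
      intro hx hx2
      have h1 : S^[n] x ∈ Bᶜ := by
        have h2 := hx.2
        simp only [mem_iInter] at h2
        exact h2 n hn1
      exact h1 (mem_preimage.1 hx2).1
    rw [hempty] at hpos
    simp at hpos
  refine measure_mono_null ?_ (measure_iUnion_null
    (fun m : ℕ => by rw [(hmp.iterate m).measure_preimage hA0m.nullMeasurableSet]; exact hA0null))
  intro x hx
  obtain ⟨hxB, hxn⟩ := hx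
  rw [mem_infRet] at hxn
  push_neg at hxn
  obtain ⟨N, hN⟩ := hxn
  set P := fun k => S^[k] x ∈ B with hP
  have hP0 : P 0 := by simpa [hP] using hxB
  set m := Nat.findGreatest P N with hm
  have hPm : P m := Nat.findGreatest_spec (Nat.zero_le N) hP0
  refine mem_iUnion.2 ⟨m, ?_⟩
  simp only [mem_preimage]
  refine ⟨hPm, ?_⟩
  simp only [mem_iInter]
  intro k hk
  simp only [mem_preimage, mem_compl_iff]
  rw [← Function.iterate_add_apply]
  rcases le_or_gt (k + m) N with hle | hlt
  · intro hB'
    have hgt : Nat.findGreatest P N < k + m := by rw [← hm]; omega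
    exact Nat.findGreatest_is_greatest (P := P) hgt hle hB'
  · exact hN (k + m) (by omega)

lemma cons_inv [StandardBorelSpace X] (hTm : Measurable T)
    (hli : Function.LeftInverse Ti T) (hri : Function.RightInverse Ti T)
    (hmp : MeasurePreserving T ν ν) (hcons : Conservative' ν T) : Conservative' ν Ti := by
  intro A hA hpos
  obtain ⟨n, hn1, hpos'⟩ := hcons A hA hpos
  refine ⟨n, hn1, ?_⟩
  have hinj : Function.Injective T := hli.injective
  have hkey : Ti^[n] ⁻¹' A = T^[n] '' A := by
    ext y
    constructor
    · intro hy
      exact ⟨Ti^[n] y, hy, (hri.iterate n) y⟩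
    · rintro ⟨x, hx, rfl⟩
      have := (hli.iterate n) x
      simpa [mem_preimage, this] using hx
  rw [hkey]
  have him : A ∩ T^[n] '' A = T^[n] '' (T^[n] ⁻¹' A ∩ A) := by
    rw [Set.inter_comm, Set.inter_comm (T^[n] ⁻¹' A) A, Set.image_inter_preimage]
  rw [him, measure_image_of_mp (hTm.iterate n) (hinj.iterate n) (hmp.iterate n)
    (((hTm.iterate n) hA).inter hA), Set.inter_comm]
  exact hpos'

end Meas

end FSAUD

/-- A conservative aperiodic (resp. ergodic) `T` is uniformly approximated by finitely
supported elements of its full group which are aperiodic (resp. ergodic) in restriction to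
their support: for every `ε > 0` there is `T_f ∈ [T]` with `ν(supp T_f) < ∞`,
`μ{x : T x ≠ T_f x} < ε` (`μ` being a fixed equivalent probability measure), `T_f`
aperiodic on its support, and ergodic on its support whenever `T` is ergodic. -/
theorem finitely_supported_aperiodic_uniformly_dense [MeasurableSpace X]
    [StandardBorelSpace X]
    (ν μ : MeasureTheory.Measure X) [SigmaFinite ν] [IsProbabilityMeasure μ]
    (h1 : μ ≪ ν) (h2 : ν ≪ μ)
    (T : X → X) (hT : IsMPBij ν T)
    (hcons : Conservative' ν T)
    (haper : ν {x | ∃ n : ℕ, 1 ≤ n ∧ T^[n] x = x} = 0)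
    (ε : ℝ≥0∞) (hε : 0 < ε) :
    ∃ Tf ∈ fullGroupGen ν T, ν (supp Tf) < ⊤ ∧ μ {x | T x ≠ Tf x} < ε ∧
      ν {x ∈ supp Tf | ∃ n : ℕ, 1 ≤ n ∧ Tf^[n] x = x} = 0 ∧
      (ErgodicMP ν T →
        ∀ A : Set X, MeasurableSet A → A ⊆ supp Tf → ν ((Tf '' A) ∆ A) = 0 →
          ν A = 0 ∨ ν (supp Tf \ A) = 0) := by
  classical
  obtain ⟨hTm, hTbij, hTmp⟩ := hT
  have hTinj : Function.Injective T := hTbij.injective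
  set e : X ≃ X := Equiv.ofBijective T hTbij with he
  set Ti : X → X := ⇑e.symm with hTidef
  have hli : Function.LeftInverse Ti T := fun x => e.symm_apply_apply x
  have hri : Function.RightInverse Ti T := fun x => e.apply_symm_apply x
  have hTemb : MeasurableEmbedding T := hTm.measurableEmbedding hTinj
  have hTipre : ∀ A : Set X, Ti ⁻¹' A = T '' A := by
    intro A
    ext y
    constructor
    · intro hy
      exact ⟨Ti y, hy, hri y⟩
    · rintro ⟨x, hx, rfl⟩
      have hx2 := hli x
      simpa [mem_preimage, hx2] using hx
  have hTim : Measurable Ti := by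
    intro A hA
    rw [hTipre]
    exact hTemb.measurableSet_image' hA
  have hTimp : MeasurePreserving Ti ν ν := by
    refine ⟨hTim, Measure.ext fun A hA => ?_⟩
    rw [Measure.map_apply hTim hA, hTipre]
    exact FSAUD.measure_image_of_mp hTm hTinj hTmp hA
  have hconsTi : Conservative' ν Ti := FSAUD.cons_inv hTm hli hri hTmp hcons
  -- choice of the finite-measure set B
  set D : ℕ → Set X := fun n => spanningSets ν n ∩ T ⁻¹' spanningSets ν n with hD
  have hDm : ∀ n, MeasurableSet (D n) := fun n =>
    (measurableSet_spanningSets ν n).inter (hTm (measurableSet_spanningSets ν n))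
  have hDmono : Monotone D := fun a b hab =>
    inter_subset_inter (monotone_spanningSets ν hab)
      (preimage_mono (monotone_spanningSets ν hab))
  have hDunion : ⋃ n, D n = univ := by
    refine eq_univ_of_forall fun x => ?_
    have h1 : x ∈ ⋃ n, spanningSets ν n := by rw [iUnion_spanningSets]; trivial
    have h2 : T x ∈ ⋃ n, spanningSets ν n := by rw [iUnion_spanningSets]; trivial
    obtain ⟨a, ha⟩ := mem_iUnion.1 h1
    obtain ⟨b, hb⟩ := mem_iUnion.1 h2
    exact mem_iUnion.2 ⟨max a b, monotone_spanningSets ν (le_max_left a b) ha,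
      monotone_spanningSets ν (le_max_right a b) hb⟩
  have htend : Tendsto (fun n => μ (D n)ᶜ) atTop (𝓝 0) := by
    have h1 : Tendsto (⇑μ ∘ fun n => (D n)ᶜ) atTop (𝓝 (μ (⋂ n, (D n)ᶜ))) :=
      tendsto_measure_iInter_atTop (fun n => ((hDm n).compl).nullMeasurableSet)
        (fun a b hab => compl_subset_compl.2 (hDmono hab)) ⟨0, (measure_lt_top μ _).ne⟩
    have h2 : (⋂ n, (D n)ᶜ) = ∅ := by
      rw [← compl_iUnion, hDunion, compl_univ]
    rw [h2, measure_empty] at h1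
    exact h1
  obtain ⟨nB, hnB⟩ := (htend.eventually_lt_const hε).exists
  set B : Set X := spanningSets ν nB with hBdef
  have hBm : MeasurableSet B := measurableSet_spanningSets ν nB
  have hBfin : ν B < ⊤ := measure_spanningSets_lt_top ν nB
  have hBcompl : μ (Bᶜ ∪ T ⁻¹' Bᶜ) < ε := by
    have h3 : Bᶜ ∪ T ⁻¹' Bᶜ = (D nB)ᶜ := by
      rw [hD]
      simp only [compl_inter, preimage_compl]
      rfl
    rw [h3]
    exact hnB
  -- the core and the induced transformation
  set C : Set X := FSAUD.coreC T Ti B with hC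
  set Tf : X → X := FSAUD.indMap T Ti B with hTf
  have hCm : MeasurableSet C := FSAUD.measurableSet_coreC hTm hTim hBm
  have hCB : C ⊆ B := FSAUD.coreC_subset
  have hTfbij : Function.Bijective Tf := FSAUD.indMap_bijective hli hri
  have hTfm : Measurable Tf := FSAUD.indMap_measurable hTm hTim hBm
  have hTfmp : MeasurePreserving Tf ν ν :=
    FSAUD.indMap_measurePreserving hTm hTim hli hri hTmp hBm
  have hTfMPBij : IsMPBij ν Tf := ⟨hTfm, hTfbij, hTfmp⟩
  have hsupp : supp Tf ⊆ C := FSAUD.supp_indMap_subset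
  have hBC : ν (B \ C) = 0 := by
    have hn1 : ν (B \ FSAUD.infRet T B) = 0 := FSAUD.ae_infRet hTm hTmp hcons hBm
    have hn2 : ν (B \ FSAUD.infRet Ti B) = 0 := FSAUD.ae_infRet hTim hTimp hconsTi hBm
    refine measure_mono_null ?_ (measure_union_null hn1 hn2)
    intro x hx
    by_cases hxF : x ∈ FSAUD.infRet T B
    · exact Or.inr ⟨hx.1, fun hxFb => hx.2 ⟨⟨hx.1, hxF⟩, hxFb⟩⟩
    · exact Or.inl ⟨hx.1, hxF⟩
  refine ⟨Tf, ?_, ?_, ?_, ?_, ?_⟩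
  · -- full group membership
    intro G hG hTG
    obtain ⟨⟨hGmp, hGid, hGcomp, hGinv⟩, hGae, hGglue⟩ := hG
    have hTn : ∀ n : ℕ, T^[n] ∈ G := by
      intro n
      induction n with
      | zero => simpa [Function.iterate_zero] using hGid
      | succ n ih =>
        rw [Function.iterate_succ']
        exact hGcomp T hTG _ ih
    exact hGglue Tf (fun n => T^[n]) (FSAUD.pieceA T Ti B) hTfMPBij hTn
      (FSAUD.measurableSet_pieceA hTm hTim hBm) FSAUD.pieceA_disjoint
      FSAUD.iUnion_pieceA FSAUD.indMap_eq_pieceA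
  · -- finite support
    exact lt_of_le_of_lt (measure_mono (hsupp.trans hCB)) hBfin
  · -- ε-closeness
    have hsub : {x | T x ≠ Tf x} ⊆ (Bᶜ ∪ T ⁻¹' Bᶜ) ∪ (B \ C) := by
      intro x hx
      by_cases hxB : x ∈ B
      · by_cases hxC : x ∈ C
        · by_cases hxT : T x ∈ B
          · exfalso
            apply hx
            have hr1 : FSAUD.retT T B x = 1 := by
              have hle : FSAUD.retT T B x ≤ 1 :=
                FSAUD.retT_le le_rfl (by rwa [Function.iterate_one])
              have hge := (FSAUD.retT_mem (FSAUD.exists_ret hxC)).1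
              omega
            rw [hTf, FSAUD.indMap_of_mem hxC, hr1, Function.iterate_one]
          · exact Or.inl (Or.inr hxT)
        · exact Or.inr ⟨hxB, hxC⟩
      · exact Or.inl (Or.inl hxB)
    calc μ {x | T x ≠ Tf x} ≤ μ ((Bᶜ ∪ T ⁻¹' Bᶜ) ∪ (B \ C)) := measure_mono hsub
      _ ≤ μ (Bᶜ ∪ T ⁻¹' Bᶜ) + μ (B \ C) := measure_union_le _ _
      _ = μ (Bᶜ ∪ T ⁻¹' Bᶜ) := by rw [h1 hBC, add_zero]
      _ < ε := hBcompl
  · -- aperiodicity on the support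
    have hCmapsTf : ∀ x ∈ C, Tf x ∈ C := fun x hx => FSAUD.coreC_maps hli hx
    have hiter : ∀ (n : ℕ) (x), x ∈ C → Tf^[n] x ∈ C ∧ ∃ m, n ≤ m ∧ Tf^[n] x = T^[m] x := by
      intro n
      induction n with
      | zero => exact fun x hx => ⟨hx, 0, le_rfl, rfl⟩
      | succ n ih =>
        intro x hx
        obtain ⟨hzC, m, hm, hzm⟩ := ih x hx
        have hr1 := (FSAUD.retT_mem (FSAUD.exists_ret hzC)).1
        constructor
        · rw [Function.iterate_succ_apply']
          exact hCmapsTf _ hzC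
        · refine ⟨FSAUD.retT T B (Tf^[n] x) + m, by omega, ?_⟩
          rw [Function.iterate_succ_apply', hTf, FSAUD.indMap_of_mem hzC, hzm,
            ← Function.iterate_add_apply]
    refine measure_mono_null ?_ haper
    rintro x ⟨hx1, n, hn1, hn2⟩
    have hxC : x ∈ C := hsupp hx1
    obtain ⟨_, m, hm, heq⟩ := hiter n x hxC
    refine ⟨m, le_trans hn1 hm, ?_⟩
    rw [← heq, hn2]
  · -- ergodicity on the support
    intro hErg A hA hAsupp hAsd
    have hAC : A ⊆ C := hAsupp.trans hsupp
    have hTfinj : Function.Injective Tf := hTfbij.injective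
    have hTfemb : MeasurableEmbedding Tf := hTfm.measurableEmbedding hTfinj
    set E : Set X := (Tf '' A) ∆ A with hE
    have hEm : MeasurableSet E := (hTfemb.measurableSet_image' hA).symmDiff hA
    have hEnull : ν E = 0 := hAsd
    set N : Set X := (⋃ n, Tf^[n] '' E) ∪ ⋃ n, Tf^[n] ⁻¹' E with hN
    have hNm : MeasurableSet N :=
      (MeasurableSet.iUnion fun n =>
        ((hTfm.iterate n).measurableEmbedding (hTfinj.iterate n)).measurableSet_image' hEm).union
      (MeasurableSet.iUnion fun n => (hTfm.iterate n) hEm)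
    have hNnull : ν N = 0 := by
      refine measure_union_null (measure_iUnion_null fun n => ?_)
        (measure_iUnion_null fun n => ?_)
      · rw [FSAUD.measure_image_of_mp (hTfm.iterate n) (hTfinj.iterate n) (hTfmp.iterate n) hEm]
        exact hEnull
      · rw [(hTfmp.iterate n).measure_preimage hEm.nullMeasurableSet]
        exact hEnull
    have hNfwd : ∀ x ∈ N, Tf x ∈ N := by
      rintro x (hx | hx)
      · obtain ⟨n, z, hz, hzx⟩ := by simpa only [mem_iUnion, mem_image] using hx
        refine Or.inl (mem_iUnion.2 ⟨n + 1, ⟨z, hz, ?_⟩⟩)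
        rw [Function.iterate_succ_apply', hzx]
      · obtain ⟨n, hn⟩ := mem_iUnion.1 hx
        match n, hn with
        | 0, hn =>
          refine Or.inl (mem_iUnion.2 ⟨1, ⟨x, ?_, ?_⟩⟩)
          · simpa using hn
          · rw [Function.iterate_one]
        | (m+1), hn =>
          refine Or.inr (mem_iUnion.2 ⟨m, ?_⟩)
          rw [mem_preimage, ← Function.iterate_succ_apply]
          exact hn
    have hNbwd : ∀ x, Tf x ∈ N → x ∈ N := by
      rintro x (hx | hx)
      · obtain ⟨n, z, hz, hzx⟩ := by simpa only [mem_iUnion, mem_image] using hx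
        match n, hzx with
        | 0, hzx =>
          refine Or.inr (mem_iUnion.2 ⟨1, ?_⟩)
          rw [mem_preimage, Function.iterate_one, ← hzx]
          exact hz
        | (m+1), hzx =>
          refine Or.inl (mem_iUnion.2 ⟨m, ⟨z, hz, ?_⟩⟩)
          have hzx2 : Tf (Tf^[m] z) = Tf x := by
            rw [← Function.iterate_succ_apply' Tf m z]
            exact hzx
          exact hTfinj hzx2
      · obtain ⟨n, hn⟩ := mem_iUnion.1 hx
        refine Or.inr (mem_iUnion.2 ⟨n + 1, ?_⟩)
        rw [mem_preimage, Function.iterate_succ_apply]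
        exact hn
    set A' : Set X := A \ N with hA'
    have hA'm : MeasurableSet A' := hA.diff hNm
    have hA'A : A' ⊆ A := diff_subset
    have hA'C : A' ⊆ C := fun x hx => hAC hx.1
    have hTfA' : Tf '' A' = A' := by
      apply Subset.antisymm
      · rintro _ ⟨x, hx, rfl⟩
        have hx2 : Tf x ∉ N := fun h => hx.2 (hNbwd x h)
        have hx3 : Tf x ∈ A := by
          by_contra h
          have hmem : Tf x ∈ E := by
            rw [hE, Set.mem_symmDiff]
            exact Or.inl ⟨⟨x, hx.1, rfl⟩, h⟩
          exact hx2 (Or.inr (mem_iUnion.2 ⟨0, by simpa using hmem⟩))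
        exact ⟨hx3, hx2⟩
      · intro y hy
        have h1 : y ∈ Tf '' A := by
          by_contra h
          have hmem : y ∈ E := by
            rw [hE, Set.mem_symmDiff]
            exact Or.inr ⟨hy.1, h⟩
          exact hy.2 (Or.inr (mem_iUnion.2 ⟨0, by simpa using hmem⟩))
        obtain ⟨x, hxA, hxy⟩ := h1
        refine ⟨x, ⟨hxA, fun hxN => hy.2 ?_⟩, hxy⟩
        rw [← hxy]
        exact hNfwd x hxN
    set Astar : Set X := ⋃ n, T^[n] '' A' with hAstar
    have hAstarm : MeasurableSet Astar := MeasurableSet.iUnion fun n =>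
      ((hTm.iterate n).measurableEmbedding (hTinj.iterate n)).measurableSet_image' hA'm
    have hA'sub : A' ⊆ ⋃ n, T^[n+1] '' A' := by
      intro y hy
      have hy2 : y ∈ Tf '' A' := by rw [hTfA']; exact hy
      obtain ⟨x, hxA', rfl⟩ := hy2
      have hxC := hA'C hxA'
      have hr1 := (FSAUD.retT_mem (FSAUD.exists_ret hxC)).1
      refine mem_iUnion.2 ⟨FSAUD.retT T B x - 1, ⟨x, hxA', ?_⟩⟩
      rw [Nat.sub_add_cancel hr1]
      exact (FSAUD.indMap_of_mem hxC).symm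
    have heqTA : T '' Astar = Astar := by
      have him : T '' Astar = ⋃ n, T^[n+1] '' A' := by
        rw [hAstar, image_iUnion]
        refine iUnion_congr fun n => ?_
        rw [← Set.image_comp, ← Function.iterate_succ']
      have hAeq : Astar = ⋃ n, T^[n+1] '' A' := by
        apply Subset.antisymm
        · rintro x hx
          obtain ⟨n, hn⟩ := mem_iUnion.1 hx
          match n, hn with
          | 0, hn =>
            have : x ∈ A' := by simpa using hn
            exact hA'sub this
          | (m+1), hn => exact mem_iUnion.2 ⟨m, hn⟩
        · rintro x hx
          obtain ⟨n, hn⟩ := mem_iUnion.1 hx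
          exact mem_iUnion.2 ⟨n + 1, hn⟩
      rw [him, ← hAeq]
    rcases hErg Astar hAstarm (by rw [heqTA, symmDiff_self]; simp) with h0 | h0
    · left
      have hsubA : A ⊆ Astar ∪ N := by
        intro x hx
        by_cases hxN : x ∈ N
        · exact Or.inr hxN
        · exact Or.inl (mem_iUnion.2 ⟨0, by simpa [hA'] using (⟨hx, hxN⟩ : x ∈ A')⟩)
      exact measure_mono_null hsubA (measure_union_null h0 hNnull)
    · right
      have hclaim : ∀ n : ℕ, ∀ y ∈ A', ∀ x ∈ C, T^[n] y = x → x ∈ A' := by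
        intro n
        induction n using Nat.strong_induction_on with
        | _ n ih =>
          intro y hyA' x hxC hxy
          rcases Nat.eq_zero_or_pos n with rfl | hn
          · rw [Function.iterate_zero_apply] at hxy
            rwa [← hxy]
          · have hyC := hA'C hyA'
            have hr := FSAUD.retT_mem (FSAUD.exists_ret hyC)
            have hle : FSAUD.retT T B y ≤ n := FSAUD.retT_le hn (by rw [hxy]; exact hCB hxC)
            have hz : Tf y ∈ A' := by
              rw [← hTfA']
              exact ⟨y, hyA', rfl⟩
            have hrec : T^[n - FSAUD.retT T B y] (Tf y) = x := by
              rw [hTf, FSAUD.indMap_of_mem hyC, ← Function.iterate_add_apply,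
                Nat.sub_add_cancel hle, hxy]
            exact ih (n - FSAUD.retT T B y) (by omega) (Tf y) hz x hxC hrec
      have hsub2 : supp Tf \ A ⊆ Astarᶜ := by
        intro x hx hxAstar
        have hxC : x ∈ C := hsupp hx.1
        obtain ⟨n, hn⟩ := mem_iUnion.1 hxAstar
        obtain ⟨y, hyA', hyx⟩ := hn
        exact hx.2 (hA'A (hclaim n y hyA' x hxC hyx))
      exact measure_mono_null hsub2 h0
end
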